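/- arXiv:2310.07474 — 4 statements merged into one kernel-verified Lean document; each statement's English description precedes it below -/
import Mathlib

section
/- Let B be a left skew brace such that ζ(B) has finite exponent n. Then for each positive integer i, the factor ζ_{i+1}(B)/ζ_i(B) of the upper central series has exponent dividing n^(2^i). -/
universe u

/-- A left skew brace: a set with two group structures `(B,+)` and `(B,·)` sharing the
same identity element, satisfying `a·(b+c) = a·b - a + a·c`. -/
class SkewBrace (B : Type u) extends AddGroup B, Group B where
  zero_eq_one : (0 : B) = 1
  skew_distrib : ∀ a b c : B, a * (b + c) = a * b + (-a + a * c)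

namespace SkewBrace

variable {B : Type u} [SkewBrace B]

/-- The star product `a ∗ b = -a + a·b - b`. -/
def sbStar (a b : B) : B := -a + a * b + -b

/-- The additive commutator `[a,b]₊ = -a - b + a + b`. -/
def addCommutator (a b : B) : B := -a + -b + a + b

/-- The multiplicative commutator `[a,b]· = a⁻¹b⁻¹ab`. -/
def mulCommutator (a b : B) : B := a⁻¹ * b⁻¹ * a * b

/-- A subbrace: a subset that is a subgroup of both `(B,+)` and `(B,·)`. -/
structure IsSubbrace (S : Set B) : Prop where
  zero_mem : (0 : B) ∈ S
  add_mem : ∀ ⦃a b : B⦄, a ∈ S → b ∈ S → a + b ∈ S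
  neg_mem : ∀ ⦃a : B⦄, a ∈ S → -a ∈ S
  mul_mem : ∀ ⦃a b : B⦄, a ∈ S → b ∈ S → a * b ∈ S
  inv_mem : ∀ ⦃a : B⦄, a ∈ S → a⁻¹ ∈ S

/-- `J` is an ideal of the subbrace `S`: a subbrace of `S`, normal in `(S,+)` and
`(S,·)`, with `S ∗ J ⊆ J` and `J ∗ S ⊆ J`. -/
structure IsIdealIn (S J : Set B) : Prop where
  subset : J ⊆ S
  isSubbrace : IsSubbrace J
  add_conj_mem : ∀ ⦃b : B⦄, b ∈ S → ∀ ⦃a : B⦄, a ∈ J → b + a + -b ∈ J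
  mul_conj_mem : ∀ ⦃b : B⦄, b ∈ S → ∀ ⦃a : B⦄, a ∈ J → b * a * b⁻¹ ∈ J
  star_mem_left : ∀ ⦃b : B⦄, b ∈ S → ∀ ⦃a : B⦄, a ∈ J → sbStar b a ∈ J
  star_mem_right : ∀ ⦃a : B⦄, a ∈ J → ∀ ⦃b : B⦄, b ∈ S → sbStar a b ∈ J

/-- An ideal of the brace `B`. -/
def IsIdeal (J : Set B) : Prop := IsIdealIn (Set.univ : Set B) J

/-- A left ideal: a subbrace `L` with `B ∗ L ⊆ L`. -/
structure IsLeftIdeal (L : Set B) : Prop where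
  isSubbrace : IsSubbrace L
  star_mem_left : ∀ (b : B), ∀ ⦃a : B⦄, a ∈ L → sbStar b a ∈ L

/-- The ideal of `B` generated by a subset `E`. -/
def idealClosure (E : Set B) : Set B := ⋂₀ {I : Set B | IsIdeal I ∧ E ⊆ I}

/-- The subbrace of `B` generated by a subset `E`. -/
def subbraceClosure (E : Set B) : Set B := ⋂₀ {S : Set B | IsSubbrace S ∧ E ⊆ S}

/-- The set `X_{I,J} = [I,J]₊ ∪ [I,J]· ∪ {i·j - (i+j) : i ∈ I, j ∈ J}`. -/
def commSet (I J : Set B) : Set B :=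
  (AddSubgroup.closure {x : B | ∃ i ∈ I, ∃ j ∈ J, x = addCommutator i j} : Set B) ∪
    (Subgroup.closure {x : B | ∃ i ∈ I, ∃ j ∈ J, x = mulCommutator i j} : Set B) ∪
    {x : B | ∃ i ∈ I, ∃ j ∈ J, x = i * j + -(i + j)}

/-- The commutator ideal `[I,J]^B`: the ideal of `B` generated by `X_{I,J}`. -/
def commIdeal (I J : Set B) : Set B := idealClosure (commSet I J)

/-- The set `X ∗ Y = {x ∗ y : x ∈ X, y ∈ Y}`. -/
def starSet (X Y : Set B) : Set B := {z : B | ∃ x ∈ X, ∃ y ∈ Y, z = sbStar x y}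

/-- The centre of the subbrace `S`. -/
def centreIn (S : Set B) : Set B :=
  {a ∈ S | ∀ b ∈ S, a + b = b + a ∧ a + b = a * b ∧ a + b = b * a}

/-- The centre `ζ(B)` of the brace `B`. -/
def centre (B : Type u) [SkewBrace B] : Set B := centreIn (Set.univ : Set B)

/-- For ideals `J ≤ I` of the subbrace `S`: `I/J` is a central factor of `S`,
i.e. `I/J ≤ ζ(S/J)`. -/
def IsCentralFactorIn (S J I : Set B) : Prop :=
  ∀ ⦃a : B⦄, a ∈ I → ∀ ⦃b : B⦄, b ∈ S →
    -(a + b) + (b + a) ∈ J ∧ -(a + b) + a * b ∈ J ∧ -(a + b) + b * a ∈ J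

/-- The subbrace `S` is centrally nilpotent of class at most `n`: there is a chain of
ideals `0 = I₀ ≤ I₁ ≤ … ≤ Iₙ = S` of `S` with `I_{k+1}/I_k ≤ ζ(S/I_k)`. -/
def CentrallyNilpotentInOfClassLE (S : Set B) (n : ℕ) : Prop :=
  ∃ I : ℕ → Set B, I 0 = {0} ∧ I n = S ∧
    (∀ k ≤ n, IsIdealIn S (I k)) ∧
    (∀ k < n, I k ⊆ I (k + 1)) ∧
    (∀ k < n, IsCentralFactorIn S (I k) (I (k + 1)))

/-- The subbrace `S` is centrally nilpotent. -/
def CentrallyNilpotentIn (S : Set B) : Prop := ∃ n : ℕ, CentrallyNilpotentInOfClassLE S n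

/-- The brace `B` is centrally nilpotent. -/
def CentrallyNilpotent (B : Type u) [SkewBrace B] : Prop :=
  CentrallyNilpotentIn (Set.univ : Set B)

/-- The brace `B` is locally centrally-nilpotent: every finitely generated subbrace is
centrally nilpotent. -/
def LocallyCentrallyNilpotent (B : Type u) [SkewBrace B] : Prop :=
  ∀ E : Finset B, CentrallyNilpotentIn (subbraceClosure (E : Set B))

/-- The (finite) upper central series of `B`: `ζ₀(B) = 0` and
`ζ_{n+1}(B)/ζ_n(B) = ζ(B/ζ_n(B))`. -/
def zetaNat (B : Type u) [SkewBrace B] : ℕ → Set B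
  | 0 => {0}
  | n + 1 =>
    {a : B | ∀ b : B, -(a + b) + (b + a) ∈ zetaNat B n ∧
      -(a + b) + a * b ∈ zetaNat B n ∧ -(a + b) + b * a ∈ zetaNat B n}

/-- The transfinite upper central series of `B`. -/
noncomputable def zetaOrd (B : Type u) [SkewBrace B] (o : Ordinal.{u}) : Set B :=
  Ordinal.limitRecOn o ({0} : Set B)
    (fun _ Z =>
      {a : B | ∀ b : B, -(a + b) + (b + a) ∈ Z ∧ -(a + b) + a * b ∈ Z ∧ -(a + b) + b * a ∈ Z})
    (fun o _ ih => ⋃ (β : {β : Ordinal.{u} // β < o}), ih β.1 β.2)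

/-- The brace `B` is hypercentral: the upper central series reaches `B`. -/
def Hypercentral (B : Type u) [SkewBrace B] : Prop :=
  ∃ o : Ordinal.{u}, zetaOrd B o = Set.univ

/-- The largest ideal of `B` contained in `C`. -/
def idealCore (C : Set B) : Set B := ⋃₀ {I : Set B | IsIdeal I ∧ I ⊆ C}

/-- The lower `B`-central series of an ideal `I`:
`lowerCentralB I n = Γ_{n+1}(I)^B`, so `Γ₁(I)^B = I` and `Γ_{n+1}(I)^B = [Γ_n(I)^B, I]^B`. -/
def lowerCentralB (I : Set B) : ℕ → Set B
  | 0 => I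
  | n + 1 => commIdeal (lowerCentralB I n) I

/-- `I` is a `B`-centrally nilpotent ideal. -/
def BCentrallyNilpotent (I : Set B) : Prop := ∃ n : ℕ, lowerCentralB I n = {0}

/-- The derived series of an ideal with respect to `B`. -/
def derivedB (I : Set B) : ℕ → Set B
  | 0 => I
  | n + 1 => commIdeal (derivedB I n) (derivedB I n)

/-- The preimages in `B` of the derived series of `I/F` with respect to `B/F`. -/
def derivedModB (F I : Set B) : ℕ → Set B
  | 0 => I
  | n + 1 => idealClosure (commSet (derivedModB F I n) (derivedModB F I n) ∪ F)

/-- The Fitting ideal of `B`: the ideal generated by all `B`-centrally nilpotent ideals. -/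
def FitIdeal (B : Type u) [SkewBrace B] : Set B :=
  idealClosure (⋃₀ {I : Set B | IsIdeal I ∧ BCentrallyNilpotent I})

/-- The centraliser of an ideal `I`: the largest ideal `C` with `[C,I]^B = 0`. -/
def idealCentraliser (I : Set B) : Set B :=
  ⋃₀ {C : Set B | IsIdeal C ∧ commIdeal C I ⊆ {0}}

/-- The centraliser of a chief factor `Itop/Ibot`: the largest ideal `C` of `B` with
`[C, Itop]^B ≤ Ibot`. -/
def factorCentraliser (Itop Ibot : Set B) : Set B :=
  ⋃₀ {C : Set B | IsIdeal C ∧ commIdeal C Itop ⊆ Ibot}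

/-- A maximal left ideal of `B`. -/
def IsMaximalLeftIdeal (L : Set B) : Prop :=
  IsLeftIdeal L ∧ L ≠ Set.univ ∧
    ∀ L' : Set B, IsLeftIdeal L' → L ⊆ L' → L' = L ∨ L' = Set.univ

/-- The Frattini ideal of `B`. -/
def FratIdeal (B : Type u) [SkewBrace B] : Set B :=
  (⋂₀ {L : Set B | IsMaximalLeftIdeal L}) ∩ FitIdeal B

/-- The additive torsion set `T₊(B)`. -/
def addTorsion (B : Type u) [SkewBrace B] : Set B := {a : B | ∃ n : ℕ, 0 < n ∧ n • a = 0}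

/-- The multiplicative torsion set `T·(B)`. -/
def mulTorsion (B : Type u) [SkewBrace B] : Set B := {a : B | ∃ n : ℕ, 0 < n ∧ a ^ n = 1}

/-- The order of an element of a brace: the cardinality of the subbrace it generates
(`0` if infinite). -/
noncomputable def elemOrder (a : B) : ℕ := Nat.card ↥(subbraceClosure ({a} : Set B))

/-- `a` is a `π`-element: it is periodic and its order is a `π`-number. -/
def IsPiElement (π : Set ℕ) (a : B) : Prop :=
  0 < elemOrder a ∧ ∀ p : ℕ, p.Prime → p ∣ elemOrder a → p ∈ π

/-- The order of the coset `a + J` in the quotient brace modulo the ideal `J`: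
the number of cosets of `J` in the subbrace generated by `a` together with `J`. -/
noncomputable def elemOrderMod (J : Set B) (a : B) : ℕ :=
  Nat.card ↥((fun x : B => {y : B | -x + y ∈ J}) '' subbraceClosure ({a} ∪ J))

/-- The coset of `a` modulo the ideal `J` is a `π`-element of the quotient brace. -/
def IsPiElementMod (π : Set ℕ) (J : Set B) (a : B) : Prop :=
  0 < elemOrderMod J a ∧ ∀ p : ℕ, p.Prime → p ∣ elemOrderMod J a → p ∈ π

/-- A subideal: a finite chain `S = C₀ ⊴ C₁ ⊴ … ⊴ Cₙ = B`. -/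
def IsSubideal (S : Set B) : Prop :=
  ∃ (n : ℕ) (C : ℕ → Set B), C 0 = S ∧ C n = Set.univ ∧
    (∀ k ≤ n, IsSubbrace (C k)) ∧ ∀ k < n, IsIdealIn (C (k + 1)) (C k)

/-- An ascendant subbrace: an ordinal-indexed ascending chain from `S` to `B`. -/
def IsAscendant (S : Set B) : Prop :=
  ∃ (l : Ordinal.{u}) (C : Ordinal.{u} → Set B), C 0 = S ∧ C l = Set.univ ∧
    (∀ α ≤ l, IsSubbrace (C α)) ∧
    (∀ α < l, IsIdealIn (C (α + 1)) (C α)) ∧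
    ∀ μ ≤ l, Order.IsSuccLimit μ → C μ = ⋃ β < μ, C β

/-- A serial subbrace: there is a complete chain of subbraces containing `S` and `B`
in which each member is an ideal of its immediate successor. -/
def IsSerial (S : Set B) : Prop :=
  ∃ 𝒞 : Set (Set B), S ∈ 𝒞 ∧ Set.univ ∈ 𝒞 ∧
    (∀ D ∈ 𝒞, IsSubbrace D) ∧
    (∀ D ∈ 𝒞, ∀ E ∈ 𝒞, D ⊆ E ∨ E ⊆ D) ∧
    (∀ 𝒟 ⊆ 𝒞, 𝒟.Nonempty → ⋃₀ 𝒟 ∈ 𝒞 ∧ ⋂₀ 𝒟 ∈ 𝒞) ∧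
    ∀ D ∈ 𝒞, ∀ E ∈ 𝒞, D ⊂ E → (∀ F ∈ 𝒞, ¬(D ⊂ F ∧ F ⊂ E)) → IsIdealIn E D

/-- `S` is a maximal `p`-subgroup of `(B,+)`. -/
def IsMaxAddPSubgroup (p : ℕ) (S : AddSubgroup B) : Prop :=
  (∀ a ∈ S, ∃ k : ℕ, p ^ k • a = 0) ∧
    ∀ T : AddSubgroup B, (∀ a ∈ T, ∃ k : ℕ, p ^ k • a = 0) → S ≤ T → T = S

/-- `S` is a maximal `p`-subgroup of `(B,·)`. -/
def IsMaxMulPSubgroup (p : ℕ) (S : Subgroup B) : Prop :=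
  (∀ a ∈ S, ∃ k : ℕ, a ^ p ^ k = 1) ∧
    ∀ T : Subgroup B, (∀ a ∈ T, ∃ k : ℕ, a ^ p ^ k = 1) → S ≤ T → T = S

/-- Formal 2-polynomials of a brace: terms in two variables built from `+`, `-`, `·`,
inverse and the constant `0`. -/
inductive Poly2 : Type
  | X : Poly2
  | Y : Poly2
  | zero : Poly2
  | add : Poly2 → Poly2 → Poly2
  | neg : Poly2 → Poly2
  | mul : Poly2 → Poly2 → Poly2
  | inv : Poly2 → Poly2

/-- Evaluation of a formal 2-polynomial in a brace. -/
def Poly2.eval : Poly2 → B → B → B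
  | .X, a, _ => a
  | .Y, _, b => b
  | .zero, _, _ => 0
  | .add p q, a, b => p.eval a b + q.eval a b
  | .neg p, a, b => -(p.eval a b)
  | .mul p q, a, b => p.eval a b * q.eval a b
  | .inv p, a, b => (p.eval a b)⁻¹

/-- A 2-polynomial is absorbing if it vanishes whenever one variable is `0`. -/
def Poly2.Absorbing (p : Poly2) (B : Type u) [SkewBrace B] : Prop :=
  (∀ x : B, p.eval x (0 : B) = 0) ∧ ∀ y : B, p.eval (0 : B) y = 0

end SkewBrace

open SkewBrace

namespace ExpAux

open SkewBrace

variable {B : Type u} [SkewBrace B]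

/-- Congruence modulo a subset. -/
def Cong (K : Set B) (x y : B) : Prop := -x + y ∈ K

/-- Closure properties of the terms of the upper central series that we need. -/
structure Good (K : Set B) : Prop where
  zero_mem : (0 : B) ∈ K
  add_mem : ∀ {a b : B}, a ∈ K → b ∈ K → a + b ∈ K
  neg_mem : ∀ {a : B}, a ∈ K → -a ∈ K
  mul_mem : ∀ {a b : B}, a ∈ K → b ∈ K → a * b ∈ K
  addc : ∀ (b : B) {a : B}, a ∈ K → b + a + -b ∈ K
  mulc : ∀ (b : B) {a : B}, a ∈ K → b * a * b⁻¹ ∈ K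
  lam : ∀ (b : B) {a : B}, a ∈ K → -b + b * a ∈ K

variable {K : Set B}

theorem Good.nsmul_mem (hK : Good K) {a : B} (h : a ∈ K) : ∀ k : ℕ, k • a ∈ K
  | 0 => by simpa using hK.zero_mem
  | (k+1) => by rw [succ_nsmul]; exact hK.add_mem (hK.nsmul_mem h k) h

theorem Good.pow_mem (hK : Good K) {a : B} (h : a ∈ K) : ∀ k : ℕ, a ^ k ∈ K
  | 0 => by rw [pow_zero, ← SkewBrace.zero_eq_one]; exact hK.zero_mem
  | (k+1) => by rw [pow_succ]; exact hK.mul_mem (hK.pow_mem h k) h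

namespace Cong

theorem refl (hK : Good K) (x : B) : Cong K x x := by
  show -x + x ∈ K; rw [neg_add_cancel]; exact hK.zero_mem

theorem of_eq (hK : Good K) {x y : B} (h : x = y) : Cong K x y := h ▸ refl hK x

theorem symm (hK : Good K) {x y : B} (h : Cong K x y) : Cong K y x := by
  have := hK.neg_mem h
  rwa [neg_add_rev, neg_neg] at this

theorem trans (hK : Good K) {x y z : B} (h : Cong K x y) (h' : Cong K y z) :
    Cong K x z := by
  have := hK.add_mem h h'
  rwa [add_assoc, add_neg_cancel_left] at this

theorem add_left (hK : Good K) {x y : B} (z : B) (h : Cong K x y) :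
    Cong K (z + x) (z + y) := by
  show -(z + x) + (z + y) ∈ K
  rw [neg_add_rev, add_assoc, neg_add_cancel_left]
  exact h

theorem add_right (hK : Good K) {x y : B} (z : B) (h : Cong K x y) :
    Cong K (x + z) (y + z) := by
  show -(x + z) + (y + z) ∈ K
  have h2 := hK.addc (-z) h
  rw [neg_neg] at h2
  rw [add_assoc, add_assoc] at h2
  rw [neg_add_rev, add_assoc]
  exact h2

theorem add (hK : Good K) {x x' y y' : B} (h : Cong K x x') (h' : Cong K y y') :
    Cong K (x + y) (x' + y') :=
  trans hK (add_right hK y h) (add_left hK x' h')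

theorem neg (hK : Good K) {x y : B} (h : Cong K x y) : Cong K (-x) (-y) := by
  show -(-x) + -y ∈ K
  have h2 := hK.addc x (hK.neg_mem h)
  simp only [neg_add_rev, neg_neg] at h2 ⊢
  rwa [← add_assoc, add_assoc (x + -y), add_neg_cancel, add_zero] at h2

/-- Congruence is the same as multiplicative congruence. -/
theorem mul_iff (hK : Good K) {x y : B} : Cong K x y ↔ x⁻¹ * y ∈ K := by
  constructor
  · intro h
    have h2 : x⁻¹ * y = -x⁻¹ + x⁻¹ * (-x + y) := by
      have h3 := SkewBrace.skew_distrib (B := B) x⁻¹ x (-x + y)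
      rw [add_neg_cancel_left, inv_mul_cancel, ← SkewBrace.zero_eq_one, zero_add] at h3
      exact h3
    rw [h2]; exact hK.lam x⁻¹ h
  · intro h
    have h2 : -x + y = -x + x * (x⁻¹ * y) := by
      rw [← mul_assoc, mul_inv_cancel, one_mul]
    show -x + y ∈ K
    rw [h2]
    exact hK.lam x h

theorem mul_left (hK : Good K) {x y : B} (z : B) (h : Cong K x y) :
    Cong K (z * x) (z * y) := by
  rw [mul_iff hK] at h ⊢
  rwa [mul_inv_rev, mul_assoc, inv_mul_cancel_left]

theorem mul_right (hK : Good K) {x y : B} (z : B) (h : Cong K x y) :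
    Cong K (x * z) (y * z) := by
  rw [mul_iff hK] at h ⊢
  have h2 := hK.mulc z⁻¹ h
  rw [inv_inv] at h2
  rwa [mul_inv_rev, ← mul_assoc, mul_assoc z⁻¹ x⁻¹ y]

theorem mul (hK : Good K) {x x' y y' : B} (h : Cong K x x') (h' : Cong K y y') :
    Cong K (x * y) (x' * y') :=
  trans hK (mul_right hK y h) (mul_left hK x' h')

theorem kill_right (hK : Good K) {u : B} (x : B) (hu : u ∈ K) : Cong K (x + u) x := by
  show -(x + u) + x ∈ K
  rw [neg_add_rev, add_assoc, neg_add_cancel, add_zero]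
  exact hK.neg_mem hu

theorem kill_mid (hK : Good K) {u : B} (x y : B) (hu : u ∈ K) :
    Cong K ((x + u) + y) (x + y) :=
  add_right hK y (kill_right hK x hu)

end Cong

theorem mem_zeta_succ {i : ℕ} {a : B} :
    a ∈ zetaNat B (i+1) ↔ ∀ b : B, Cong (zetaNat B i) (a+b) (b+a) ∧
      Cong (zetaNat B i) (a+b) (a*b) ∧ Cong (zetaNat B i) (a+b) (b*a) := Iff.rfl

theorem mem_zeta_zero {a : B} : a ∈ zetaNat B 0 ↔ a = 0 := Iff.rfl

section Step

variable {i : ℕ}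

theorem zeta_coset (hK : Good (zetaNat B i)) {z z' : B} (hz : z ∈ zetaNat B (i+1))
    (h : Cong (zetaNat B i) z z') : z' ∈ zetaNat B (i+1) := by
  rw [mem_zeta_succ] at hz ⊢
  intro b
  obtain ⟨h1, h2, h3⟩ := hz b
  have e1 : Cong (zetaNat B i) (z' + b) (z + b) := Cong.add_right hK b (Cong.symm hK h)
  exact ⟨Cong.trans hK e1 (Cong.trans hK h1 (Cong.add_left hK b h)),
    Cong.trans hK e1 (Cong.trans hK h2 (Cong.mul_right hK b h)),
    Cong.trans hK e1 (Cong.trans hK h3 (Cong.mul_left hK b h))⟩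

variable (hK : Good (zetaNat B i)) {a a' : B}
include hK

theorem inv_cong_neg (ha : a ∈ zetaNat B (i+1)) : Cong (zetaNat B i) a⁻¹ (-a) := by
  have h := Cong.add_left hK (-a) ((mem_zeta_succ.mp ha a⁻¹).2.1)
  rwa [neg_add_cancel_left, mul_inv_cancel, ← SkewBrace.zero_eq_one, add_zero] at h

theorem invL (ha : a ∈ zetaNat B (i+1)) (b : B) :
    Cong (zetaNat B i) (a⁻¹ * b) (-a + b) := by
  have h := Cong.add_left hK (-a) ((mem_zeta_succ.mp ha (a⁻¹ * b)).2.1)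
  rwa [neg_add_cancel_left, ← mul_assoc, mul_inv_cancel, one_mul] at h

theorem invR (ha : a ∈ zetaNat B (i+1)) (b : B) :
    Cong (zetaNat B i) (b * a⁻¹) (-a + b) := by
  have h := (mem_zeta_succ.mp ha (b * a⁻¹)).2.2
  rw [mul_assoc, inv_mul_cancel, mul_one] at h
  have h2 := Cong.add_left hK (-a) h
  rwa [neg_add_cancel_left] at h2

theorem zsucc_zero : (0 : B) ∈ zetaNat B (i+1) := by
  rw [mem_zeta_succ]
  intro b
  refine ⟨Cong.of_eq hK (by rw [zero_add, add_zero]),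
    Cong.of_eq hK (by rw [SkewBrace.zero_eq_one, one_mul, ← SkewBrace.zero_eq_one, zero_add]),
    Cong.of_eq hK (by rw [SkewBrace.zero_eq_one, mul_one, ← SkewBrace.zero_eq_one, zero_add])⟩

theorem zsucc_add (ha : a ∈ zetaNat B (i+1)) (ha' : a' ∈ zetaNat B (i+1)) :
    a + a' ∈ zetaNat B (i+1) := by
  have P := mem_zeta_succ.mp ha
  have Q := mem_zeta_succ.mp ha'
  rw [mem_zeta_succ]
  intro b
  refine ⟨?_, ?_, ?_⟩
  · have h1 : Cong (zetaNat B i) ((a + a') + b) (a + (a' + b)) :=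
      Cong.of_eq hK (add_assoc a a' b)
    have h2 := Cong.add_left hK a (Q b).1
    have h3 : Cong (zetaNat B i) (a + (b + a')) ((a + b) + a') :=
      Cong.of_eq hK (add_assoc a b a').symm
    have h4 := Cong.add_right hK a' (P b).1
    have h5 : Cong (zetaNat B i) ((b + a) + a') (b + (a + a')) :=
      Cong.of_eq hK (add_assoc b a a')
    exact Cong.trans hK h1 (Cong.trans hK h2 (Cong.trans hK h3 (Cong.trans hK h4 h5)))
  · have g1 : Cong (zetaNat B i) ((a + a') * b) ((a * a') * b) :=
      Cong.mul_right hK b (P a').2.1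
    have g2 : Cong (zetaNat B i) ((a * a') * b) (a * (a' + b)) := by
      rw [mul_assoc]
      exact Cong.mul_left hK a (Cong.symm hK (Q b).2.1)
    have g3 : (a : B) * (a' + b) = a * a' + (-a + a * b) := SkewBrace.skew_distrib a a' b
    have g4 : Cong (zetaNat B i) (a * a' + (-a + a * b)) ((a + a') + (-a + a * b)) :=
      Cong.add_right hK _ (Cong.symm hK (P a').2.1)
    have g5 : Cong (zetaNat B i) ((a + a') + (-a + a * b)) ((a + a') + (-a + (a + b))) :=
      Cong.add_left hK _ (Cong.add_left hK (-a) (Cong.symm hK (P b).2.1))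
    have g6 : ((a : B) + a') + (-a + (a + b)) = (a + a') + b := by
      rw [neg_add_cancel_left]
    exact Cong.symm hK (Cong.trans hK g1 (Cong.trans hK g2 (Cong.trans hK
      (Cong.of_eq hK g3) (Cong.trans hK g4 (Cong.trans hK g5 (Cong.of_eq hK g6))))))
  · have g1 : (b : B) * (a + a') = b * a + (-b + b * a') := SkewBrace.skew_distrib b a a'
    have g2 : Cong (zetaNat B i) (b * a + (-b + b * a')) ((a + b) + (-b + b * a')) :=
      Cong.add_right hK _ (Cong.symm hK (P b).2.2)
    have g3 : Cong (zetaNat B i) ((a + b) + (-b + b * a')) ((a + b) + (-b + (a' + b))) :=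
      Cong.add_left hK _ (Cong.add_left hK (-b) (Cong.symm hK (Q b).2.2))
    have g4 : ((a : B) + b) + (-b + (a' + b)) = (a + a') + b := by
      rw [add_assoc a b, add_neg_cancel_left, ← add_assoc]
    exact Cong.symm hK (Cong.trans hK (Cong.of_eq hK g1) (Cong.trans hK g2
      (Cong.trans hK g3 (Cong.of_eq hK g4))))

theorem zsucc_neg (ha : a ∈ zetaNat B (i+1)) : -a ∈ zetaNat B (i+1) := by
  have P := mem_zeta_succ.mp ha
  have hi := inv_cong_neg hK ha
  rw [mem_zeta_succ]
  intro b
  refine ⟨?_, ?_, ?_⟩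
  · have h1 : Cong (zetaNat B i) (b + -a) (-a + (a + b) + -a) :=
      Cong.of_eq hK (by rw [neg_add_cancel_left])
    have h2 : Cong (zetaNat B i) (-a + (a + b) + -a) (-a + (b + a) + -a) :=
      Cong.add_right hK (-a) (Cong.add_left hK (-a) (P b).1)
    have h3 : Cong (zetaNat B i) (-a + (b + a) + -a) (-a + b) :=
      Cong.of_eq hK (by rw [← add_assoc, add_assoc (-a + b), add_neg_cancel, add_zero])
    exact Cong.symm hK (Cong.trans hK h1 (Cong.trans hK h2 h3))
  · have g1 : Cong (zetaNat B i) ((-a) * b) (a⁻¹ * b) :=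
      Cong.mul_right hK b (Cong.symm hK hi)
    exact Cong.symm hK (Cong.trans hK g1 (invL hK ha b))
  · have g1 : Cong (zetaNat B i) (b * (-a)) (b * a⁻¹) :=
      Cong.mul_left hK b (Cong.symm hK hi)
    exact Cong.symm hK (Cong.trans hK g1 (invR hK ha b))

theorem zsucc_mul (ha : a ∈ zetaNat B (i+1)) (ha' : a' ∈ zetaNat B (i+1)) :
    a * a' ∈ zetaNat B (i+1) :=
  zeta_coset hK (zsucc_add hK ha ha') ((mem_zeta_succ.mp ha a').2.1)

theorem zsucc_addc (b : B) (ha : a ∈ zetaNat B (i+1)) :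
    b + a + -b ∈ zetaNat B (i+1) := by
  refine zeta_coset hK ha (Cong.symm hK ?_)
  have h1 : Cong (zetaNat B i) (b + a + -b) ((a + b) + -b) :=
    Cong.add_right hK (-b) (Cong.symm hK (mem_zeta_succ.mp ha b).1)
  exact Cong.trans hK h1 (Cong.of_eq hK (add_neg_cancel_right a b))

theorem zsucc_mulc (b : B) (ha : a ∈ zetaNat B (i+1)) :
    b * a * b⁻¹ ∈ zetaNat B (i+1) := by
  refine zeta_coset hK ha (Cong.symm hK ?_)
  have h0 : Cong (zetaNat B i) (b * a) (a * b) :=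
    Cong.trans hK (Cong.symm hK (mem_zeta_succ.mp ha b).2.2) (mem_zeta_succ.mp ha b).2.1
  have h1 : Cong (zetaNat B i) (b * a * b⁻¹) (a * b * b⁻¹) := Cong.mul_right hK b⁻¹ h0
  exact Cong.trans hK h1 (Cong.of_eq hK (mul_inv_cancel_right a b))

theorem zsucc_lam (b : B) (ha : a ∈ zetaNat B (i+1)) :
    -b + b * a ∈ zetaNat B (i+1) := by
  refine zeta_coset hK ha (Cong.symm hK ?_)
  have h0 : Cong (zetaNat B i) (b * a) (b + a) :=
    Cong.trans hK (Cong.symm hK (mem_zeta_succ.mp ha b).2.2) (mem_zeta_succ.mp ha b).1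
  have h1 := Cong.add_left hK (-b) h0
  exact Cong.trans hK h1 (Cong.of_eq hK (neg_add_cancel_left b a))

end Step

theorem zero_mul' (b : B) : (0 : B) * b = b := by rw [SkewBrace.zero_eq_one, one_mul]
theorem mul_zero' (b : B) : b * (0 : B) = b := by rw [SkewBrace.zero_eq_one, mul_one]

theorem good_zeta (B : Type u) [SkewBrace B] : ∀ i : ℕ, Good (zetaNat B i)
  | 0 => by
    refine ⟨rfl, ?_, ?_, ?_, ?_, ?_, ?_⟩
    · intro a b ha hb
      rw [mem_zeta_zero] at ha hb ⊢; rw [ha, hb, add_zero]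
    · intro a ha
      rw [mem_zeta_zero] at ha ⊢; rw [ha, neg_zero]
    · intro a b ha hb
      rw [mem_zeta_zero] at ha hb ⊢; rw [ha, hb, zero_mul']
    · intro b a ha
      rw [mem_zeta_zero] at ha ⊢; rw [ha, add_zero, add_neg_cancel]
    · intro b a ha
      rw [mem_zeta_zero] at ha ⊢
      rw [ha, mul_zero', mul_inv_cancel, ← SkewBrace.zero_eq_one]
    · intro b a ha
      rw [mem_zeta_zero] at ha ⊢; rw [ha, mul_zero', neg_add_cancel]
  | (i+1) => by
    have ih := good_zeta B i
    refine ⟨zsucc_zero ih, fun h h' => zsucc_add ih h h', fun h => zsucc_neg ih h,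
      fun h h' => zsucc_mul ih h h', ?_, ?_, ?_⟩
    · intro b a h; exact zsucc_addc ih b h
    · intro b a h; exact zsucc_mulc ih b h
    · intro b a h; exact zsucc_lam ih b h


section Main

variable {i m : ℕ} {a : B}

theorem main_step
    (hm : ∀ z ∈ zetaNat B (i+1), m • z ∈ zetaNat B i ∧ z ^ m ∈ zetaNat B i)
    (ha : a ∈ zetaNat B (i+2)) :
    m • a ∈ zetaNat B (i+1) ∧ a ^ m ∈ zetaNat B (i+1) := by
  have hK := good_zeta B i
  have hZ := good_zeta B (i+1)
  -- deviations of a lie in Z := zetaNat B (i+1)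
  have hαZ : ∀ b : B, -(a+b)+(b+a) ∈ zetaNat B (i+1) := fun b => (mem_zeta_succ.mp ha b).1
  have hδZ : ∀ b : B, -(a+b)+(a*b) ∈ zetaNat B (i+1) := fun b => (mem_zeta_succ.mp ha b).2.1
  have hεZ : ∀ b : B, -(a+b)+(b*a) ∈ zetaNat B (i+1) := fun b => (mem_zeta_succ.mp ha b).2.2
  have eqα : ∀ b : B, b + a = (a+b) + (-(a+b)+(b+a)) := fun b => (add_neg_cancel_left _ _).symm
  have eqδ : ∀ b : B, a * b = (a+b) + (-(a+b)+(a*b)) := fun b => (add_neg_cancel_left _ _).symm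
  have eqε : ∀ b : B, b * a = (a+b) + (-(a+b)+(b*a)) := fun b => (add_neg_cancel_left _ _).symm
  -- central elements multiply like they add
  have hcent : ∀ (z x : B), z ∈ zetaNat B (i+1) → Cong (zetaNat B i) (-x + x * z) z := by
    intro z x hz
    have h1 : Cong (zetaNat B i) (x * z) (x + z) :=
      Cong.trans hK (Cong.symm hK (mem_zeta_succ.mp hz x).2.2) (mem_zeta_succ.mp hz x).1
    exact Cong.trans hK (Cong.add_left hK (-x) h1) (Cong.of_eq hK (neg_add_cancel_left x z))
  have mulplus : ∀ (x z b : B), z ∈ zetaNat B (i+1) →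
      Cong (zetaNat B i) ((x + z) * b) ((x * b) + z) := by
    intro x z b hz
    have h1 : Cong (zetaNat B i) (x + z) (x * z) :=
      Cong.trans hK (Cong.symm hK (mem_zeta_succ.mp hz x).1) (mem_zeta_succ.mp hz x).2.2
    have h2 := Cong.mul_right hK b h1
    have h3 : Cong (zetaNat B i) (z * b) (b + z) :=
      Cong.trans hK (Cong.symm hK (mem_zeta_succ.mp hz b).2.1) (mem_zeta_succ.mp hz b).1
    have h4 := Cong.mul_left hK x h3
    have h6 := Cong.add_left hK (x * b) (hcent z x hz)
    exact Cong.trans hK h2 (Cong.trans hK (Cong.of_eq hK (mul_assoc x z b))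
      (Cong.trans hK h4 (Cong.trans hK
        (Cong.of_eq hK (SkewBrace.skew_distrib x b z)) h6)))
  -- Claim A: additive powers of a commute with b up to multiples of the deviation
  have claimA : ∀ (b c : B), c ∈ zetaNat B (i+1) → b + a = (a+b) + c →
      ∀ k : ℕ, Cong (zetaNat B i) (b + k • a) ((k • a + b) + k • c) := by
    intro b c hc heq k
    induction k with
    | zero => exact Cong.of_eq hK (by simp)
    | succ k ihk =>
      have hkc : k • c ∈ zetaNat B (i+1) := hZ.nsmul_mem hc k
      have e1 : b + (k+1) • a = (b + k • a) + a := by rw [succ_nsmul, ← add_assoc]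
      have h1 := Cong.add_right hK a ihk
      have e2 : ((k • a + b) + k • c) + a = (k • a + b) + (k • c + a) := by
        simp only [add_assoc]
      have h2 := Cong.add_left hK (k • a + b) (mem_zeta_succ.mp hkc a).1
      have e3 : (k • a + b) + (a + k • c) = ((k+1) • a + b) + (k+1) • c := by
        have e0 : (k • a + b) + (a + k • c) = (k • a + (b + a)) + k • c := by
          simp only [add_assoc]
        rw [e0, heq, succ_nsmul a k, succ_nsmul' c k]
        simp only [add_assoc]
      exact Cong.trans hK (Cong.of_eq hK e1) (Cong.trans hK h1 (Cong.trans hK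
        (Cong.of_eq hK e2) (Cong.trans hK h2 (Cong.of_eq hK e3))))
  -- Claim C: right multiplication by additive powers of a
  have claimC : ∀ (b c : B), c ∈ zetaNat B (i+1) → b * a = (a+b) + c →
      ∀ k : ℕ, Cong (zetaNat B i) (b * (k • a)) ((k • a + b) + k • c) := by
    intro b c hc heq k
    induction k with
    | zero =>
      refine Cong.of_eq hK ?_
      rw [zero_nsmul, zero_nsmul, mul_zero', zero_add, add_zero]
    | succ k ihk =>
      have hkc : k • c ∈ zetaNat B (i+1) := hZ.nsmul_mem hc k
      have e1 : b * ((k+1) • a) = b * (k • a) + (-b + b * a) := by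
        rw [succ_nsmul, SkewBrace.skew_distrib]
      have h1 := Cong.add_right hK (-b + b * a) ihk
      have e2 : ((k • a + b) + k • c) + (-b + b * a) = (k • a + b) + (k • c + (-b + b * a)) := by
        simp only [add_assoc]
      have h2 := Cong.add_left hK (k • a + b) (mem_zeta_succ.mp hkc (-b + b * a)).1
      have e3 : (k • a + b) + ((-b + b * a) + k • c) = ((k+1) • a + b) + (k+1) • c := by
        rw [heq, succ_nsmul a k, succ_nsmul' c k]
        simp only [add_assoc, add_neg_cancel_left]
      exact Cong.trans hK (Cong.of_eq hK e1) (Cong.trans hK h1 (Cong.trans hK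
        (Cong.of_eq hK e2) (Cong.trans hK h2 (Cong.of_eq hK e3))))
  -- Claim D: left multiplication by multiplicative powers of a
  have claimD : ∀ (b c : B), c ∈ zetaNat B (i+1) → a * b = (a+b) + c →
      ∀ k : ℕ, Cong (zetaNat B i) ((a ^ k) * b) ((a ^ k + b) + k • c) := by
    intro b c hc heq k
    induction k with
    | zero =>
      refine Cong.of_eq hK ?_
      rw [pow_zero, one_mul, ← SkewBrace.zero_eq_one, zero_add, zero_nsmul, add_zero]
    | succ k ihk =>
      have hkc : k • c ∈ zetaNat B (i+1) := hZ.nsmul_mem hc k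
      have e1 : a ^ (k+1) * b = a * (a ^ k * b) := by rw [pow_succ', mul_assoc]
      have h1 := Cong.mul_left hK a ihk
      have e2 : a * ((a ^ k + b) + k • c) = a * (a ^ k + b) + (-a + a * (k • c)) :=
        SkewBrace.skew_distrib a (a ^ k + b) (k • c)
      have e3 : a * (a ^ k + b) = a ^ (k+1) + (b + c) := by
        rw [SkewBrace.skew_distrib, heq, ← pow_succ', ← add_assoc (-a) (a+b) c,
          neg_add_cancel_left]
      have h2 := Cong.add hK (Cong.of_eq hK e3) (hcent (k • c) a hkc)
      have e4 : (a ^ (k+1) + (b + c)) + k • c = (a ^ (k+1) + b) + (k+1) • c := by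
        rw [succ_nsmul' c k]
        simp only [add_assoc]
      exact Cong.trans hK (Cong.of_eq hK e1) (Cong.trans hK h1 (Cong.trans hK
        (Cong.of_eq hK e2) (Cong.trans hK h2 (Cong.of_eq hK e4))))
  -- Claim E: multiplicative powers differ from additive ones by a central element
  have claimE : ∀ k : ℕ, ∃ w ∈ zetaNat B (i+1), Cong (zetaNat B i) (a ^ k) (k • a + w) := by
    intro k
    induction k with
    | zero =>
      refine ⟨0, hZ.zero_mem, Cong.of_eq hK ?_⟩
      rw [pow_zero, zero_nsmul, add_zero]
      exact SkewBrace.zero_eq_one.symm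
    | succ k ihk =>
      obtain ⟨w, hw, hE⟩ := ihk
      refine ⟨(-(a + k • a) + a * (k • a)) + w,
        hZ.add_mem (hδZ (k • a)) hw, ?_⟩
      have e1 : a ^ (k+1) = a * a ^ k := pow_succ' a k
      have h1 := Cong.mul_left hK a hE
      have e2 : a * (k • a + w) = a * (k • a) + (-a + a * w) :=
        SkewBrace.skew_distrib a (k • a) w
      have h3 := Cong.add_left hK (a * (k • a)) (hcent w a hw)
      have e4 : a * (k • a) + w = ((k+1) • a + ((-(a + k • a) + a * (k • a)) + w)) := by
        conv_lhs => rw [eqδ (k • a)]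
        rw [succ_nsmul' a k]
        simp only [add_assoc]
      exact Cong.trans hK (Cong.of_eq hK e1) (Cong.trans hK h1 (Cong.trans hK
        (Cong.of_eq hK e2) (Cong.trans hK h3 (Cong.of_eq hK e4))))
  obtain ⟨w, hw, hE⟩ := claimE m
  have hma : m • a ∈ zetaNat B (i+1) := by
    rw [mem_zeta_succ]
    intro b
    have A := claimA b _ (hαZ b) (eqα b) m
    have A' : Cong (zetaNat B i) (b + m • a) (m • a + b) :=
      Cong.trans hK A (Cong.kill_right hK _ (hm _ (hαZ b)).1)
    have Cc := claimC b _ (hεZ b) (eqε b) m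
    have C' : Cong (zetaNat B i) (b * (m • a)) (m • a + b) :=
      Cong.trans hK Cc (Cong.kill_right hK _ (hm _ (hεZ b)).1)
    have D := claimD b _ (hδZ b) (eqδ b) m
    have D' : Cong (zetaNat B i) (a ^ m * b) (a ^ m + b) :=
      Cong.trans hK D (Cong.kill_right hK _ (hm _ (hδZ b)).1)
    have hE2 : Cong (zetaNat B i) (m • a) (a ^ m + -w) :=
      Cong.symm hK (Cong.trans hK (Cong.add_right hK (-w) hE)
        (Cong.of_eq hK (add_neg_cancel_right (m • a) w)))
    have hmw : (-w) ∈ zetaNat B (i+1) := hZ.neg_mem hw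
    have S1 := mulplus (a ^ m) (-w) b hmw
    have t1 : Cong (zetaNat B i) ((a ^ m + b) + -w) (((m • a + w) + b) + -w) :=
      Cong.add_right hK (-w) (Cong.add_right hK b hE)
    have t2 : ((m • a + w) + b) + -w = (m • a + (w + b)) + -w := by simp only [add_assoc]
    have t3 : Cong (zetaNat B i) ((m • a + (w + b)) + -w) ((m • a + (b + w)) + -w) :=
      Cong.add_right hK (-w) (Cong.add_left hK (m • a) (mem_zeta_succ.mp hw b).1)
    have t4 : (m • a + (b + w)) + -w = m • a + b := by
      simp only [add_assoc, add_neg_cancel, add_zero]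
    have S2 : Cong (zetaNat B i) ((a ^ m + b) + -w) (m • a + b) :=
      Cong.trans hK t1 (Cong.trans hK (Cong.of_eq hK t2) (Cong.trans hK t3
        (Cong.of_eq hK t4)))
    have mul2 : Cong (zetaNat B i) ((m • a) * b) (m • a + b) :=
      Cong.trans hK (Cong.mul_right hK b hE2) (Cong.trans hK S1 (Cong.trans hK
        (Cong.add_right hK (-w) D') S2))
    exact ⟨Cong.symm hK A', Cong.symm hK mul2, Cong.symm hK C'⟩
  have hpa : a ^ m ∈ zetaNat B (i+1) :=
    zeta_coset hK (hZ.add_mem hma hw) (Cong.symm hK hE)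
  exact ⟨hma, hpa⟩

theorem expo (n : ℕ) (hbound : ∀ a ∈ zetaNat B 1, n • a = 0 ∧ a ^ n = 1) :
    ∀ i : ℕ, ∀ a ∈ zetaNat B (i+1), n • a ∈ zetaNat B i ∧ a ^ n ∈ zetaNat B i := by
  intro i
  induction i with
  | zero =>
    intro a ha
    obtain ⟨h1, h2⟩ := hbound a ha
    constructor
    · rw [mem_zeta_zero]; exact h1
    · rw [mem_zeta_zero, h2]; exact SkewBrace.zero_eq_one.symm
  | succ i ih =>
    intro a ha
    exact main_step ih ha

end Main

end ExpAux

/-- If `ζ(B)` has exponent `n`, then `ζ_{i+1}(B)/ζ_i(B)` has exponent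
dividing `n^(2^i)` for each positive integer `i`. -/
theorem exponent_upper_central {B : Type u} [SkewBrace B] (n : ℕ) (hn : 0 < n)
    (hbound : ∀ a ∈ zetaNat B 1, n • a = 0 ∧ a ^ n = 1)
    (hleast : ∀ m : ℕ, 0 < m → (∀ a ∈ zetaNat B 1, m • a = 0 ∧ a ^ m = 1) → n ≤ m) :
    ∀ i : ℕ, 0 < i → ∀ a ∈ zetaNat B (i + 1),
      (n ^ 2 ^ i) • a ∈ zetaNat B i ∧ a ^ n ^ 2 ^ i ∈ zetaNat B i := by
  intro i _ a ha
  have key := ExpAux.expo n hbound i a ha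
  have hKi := ExpAux.good_zeta B i
  have hpow : n ^ 2 ^ i = n * n ^ (2 ^ i - 1) := by
    rw [← pow_succ']
    congr 1
    have h1 : 1 ≤ 2 ^ i := Nat.one_le_two_pow
    omega
  constructor
  · rw [hpow, mul_nsmul]
    exact hKi.nsmul_mem key.1 _
  · rw [hpow, pow_mul]
    exact hKi.pow_mem key.2 _
end

section
/- Let B be a left skew brace and C a subbrace of B. (1) If B is hypercentral, then C is ascendant in B. (2) If B is centrally nilpotent, then C is a subideal of B. (3) If B is locally centrally-nilpotent, then C is serial in B. -/
universe u

namespace SkewBrace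

variable {B : Type u} [SkewBrace B]

/-! ### Auxiliary development -/

section Aux

variable {B : Type u} [SkewBrace B]

theorem mul_zero' (a : B) : a * 0 = a := by
  have h := skew_distrib a 0 0
  rw [add_zero] at h
  have h2 : -(a*0) + (a * 0) = -(a*0) + (a * 0 + (-a + a * 0)) := by rw [← h]
  rw [neg_add_cancel, ← add_assoc, neg_add_cancel, zero_add] at h2
  have h3 := congrArg (a + ·) h2
  simpa using h3.symm

theorem zero_mul' (a : B) : 0 * a = a := by rw [zero_eq_one, one_mul]

/-- λ_a b -/
def lmb (a b : B) : B := -a + a * b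

theorem mul_eq_add_lmb (a b : B) : a * b = a + lmb a b := by simp [lmb]

theorem lmb_eq_star_add (a b : B) : lmb a b = sbStar a b + b := by
  simp [lmb, sbStar, add_assoc]

theorem lmb_add (a b c : B) : lmb a (b + c) = lmb a b + lmb a c := by
  simp only [lmb, skew_distrib a b c, ← add_assoc]

theorem lmb_zero (a : B) : lmb a 0 = 0 := by simp [lmb, mul_zero']

theorem lmb_neg (a b : B) : lmb a (-b) = -(lmb a b) := by
  have h : lmb a (b + -b) = lmb a b + lmb a (-b) := lmb_add a b (-b)
  rw [add_neg_cancel, lmb_zero] at h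
  exact (neg_eq_of_add_eq_zero_right h.symm).symm

theorem lmb_comp (a b c : B) : lmb (a * b) c = lmb a (lmb b c) := by
  rw [show lmb b c = -b + b * c from rfl, lmb_add, lmb_neg]
  rw [lmb, lmb, lmb, mul_assoc]
  simp [add_assoc]

variable {B : Type u} [SkewBrace B]

section IdealLemmas

variable {S Z : Set B} (hZ : IsIdealIn S Z)

include hZ

theorem lmb_memZ (hS : IsSubbrace S) {b : B} (hb : b ∈ S) {z : B} (hz : z ∈ Z) :
    lmb b z ∈ Z := by
  rw [lmb_eq_star_add]
  exact hZ.isSubbrace.add_mem (hZ.star_mem_left hb hz) hz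

end IdealLemmas

/-- Congruence mod `Z`. -/
def Cg (Z : Set B) (x y : B) : Prop := -x + y ∈ Z

section CgLemmas

variable {S Z : Set B} (hS : IsSubbrace S) (hZ : IsIdealIn S Z)

theorem cg_refl (hz : (0:B) ∈ Z) (x : B) : Cg Z x x := by simp [Cg, hz]

set_option linter.unusedSectionVars false

include hS hZ

theorem cg_of_mem {z : B} (hz : z ∈ Z) : Cg Z 0 z := by simpa [Cg] using hz

theorem mem_of_cg {z : B} (h : Cg Z 0 z) : z ∈ Z := by simpa [Cg] using h

theorem cg_symm {x y : B} (h : Cg Z x y) : Cg Z y x := by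
  have := hZ.isSubbrace.neg_mem h
  simpa [Cg, neg_add_rev] using this

theorem cg_trans {x y w : B} (h : Cg Z x y) (h' : Cg Z y w) : Cg Z x w := by
  have := hZ.isSubbrace.add_mem h h'
  simpa [Cg, add_assoc] using this

theorem cg_def {x y : B} (h : Cg Z x y) : ∃ z ∈ Z, y = x + z :=
  ⟨-x + y, h, by simp⟩

theorem cg_of_eq_add {x y z : B} (hz : z ∈ Z) (h : y = x + z) : Cg Z x y := by
  simp [Cg, h, ← add_assoc, hz]

theorem cg_add_left {x y : B} (c : B) (h : Cg Z x y) : Cg Z (c + x) (c + y) := by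
  simpa [Cg, neg_add_rev, add_assoc] using h

theorem cg_add_right {x y : B} {c : B} (hc : c ∈ S) (h : Cg Z x y) :
    Cg Z (x + c) (y + c) := by
  have h2 := hZ.add_conj_mem (hS.neg_mem hc) h
  simpa [Cg, neg_add_rev, add_assoc] using h2

theorem cg_neg {x y : B} (hx : x ∈ S) (h : Cg Z x y) : Cg Z (-x) (-y) := by
  obtain ⟨z, hz, rfl⟩ := cg_def hS hZ h
  have h2 := hZ.add_conj_mem hx (hZ.isSubbrace.neg_mem hz)
  apply cg_of_eq_add hS hZ h2
  simp [neg_add_rev, add_assoc]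

theorem cg_mul_left {x y : B} {c : B} (hc : c ∈ S) (h : Cg Z x y) :
    Cg Z (c * x) (c * y) := by
  obtain ⟨z, hz, rfl⟩ := cg_def hS hZ h
  apply cg_of_eq_add hS hZ (lmb_memZ hZ hS hc hz)
  rw [skew_distrib]
  simp [lmb, add_assoc]

/-- additive cosets of an ideal are multiplicative cosets -/
theorem cg_iff_mul {x y : B} (hx : x ∈ S) : Cg Z x y ↔ ∃ z ∈ Z, y = x * z := by
  constructor
  · intro h
    obtain ⟨z, hz, rfl⟩ := cg_def hS hZ h
    refine ⟨x⁻¹ * (x + z), ?_, by rw [← mul_assoc, mul_inv_cancel, one_mul]⟩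
    have : x⁻¹ * (x + z) = lmb x⁻¹ z := by
      rw [skew_distrib, inv_mul_cancel, ← zero_eq_one, zero_add, lmb]
    rw [this]
    exact lmb_memZ hZ hS (hS.inv_mem hx) hz
  · rintro ⟨z, hz, rfl⟩
    exact cg_of_eq_add hS hZ (lmb_memZ hZ hS hx hz) (mul_eq_add_lmb x z)

theorem cg_mul_right {x y : B} {c : B} (hx : x ∈ S) (hc : c ∈ S) (h : Cg Z x y) :
    Cg Z (x * c) (y * c) := by
  obtain ⟨z, hz, rfl⟩ := (cg_iff_mul hS hZ hx).1 h
  rw [cg_iff_mul hS hZ (hS.mul_mem hx hc)]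
  refine ⟨c⁻¹ * z * c, by simpa using hZ.mul_conj_mem (hS.inv_mem hc) hz, ?_⟩
  group

theorem cg_inv {x y : B} (hx : x ∈ S) (h : Cg Z x y) : Cg Z x⁻¹ y⁻¹ := by
  obtain ⟨z, hz, rfl⟩ := (cg_iff_mul hS hZ hx).1 h
  rw [cg_iff_mul hS hZ (hS.inv_mem hx)]
  refine ⟨x * z⁻¹ * x⁻¹, hZ.mul_conj_mem hx (hZ.isSubbrace.inv_mem hz), ?_⟩
  group

end CgLemmas

theorem isSubbrace_univ : IsSubbrace (Set.univ : Set B) :=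
  ⟨trivial, fun _ _ _ _ => trivial, fun _ _ => trivial, fun _ _ _ _ => trivial,
    fun _ _ => trivial⟩

section CFLemmas

variable {S J I : Set B} (hS : IsSubbrace S) (hJ : IsIdealIn S J) (hI : IsIdealIn S I)
  (hcf : IsCentralFactorIn S J I)

include hcf

theorem cf_comm_add {z b : B} (hz : z ∈ I) (hb : b ∈ S) : Cg J (z + b) (b + z) :=
  (hcf hz hb).1

theorem cf_mul_lr {z b : B} (hz : z ∈ I) (hb : b ∈ S) : Cg J (z + b) (z * b) :=
  (hcf hz hb).2.1

theorem cf_mul_rl {z b : B} (hz : z ∈ I) (hb : b ∈ S) : Cg J (z + b) (b * z) :=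
  (hcf hz hb).2.2

include hS hJ hI

theorem cf_star_right {z b : B} (hz : z ∈ I) (hb : b ∈ S) : sbStar z b ∈ J := by
  have h1 : Cg J (z * b) (z + b) := cg_symm hS hJ (cf_mul_lr hcf hz hb)
  have h2 : Cg J (-z + z * b) (-z + (z + b)) := cg_add_left hS hJ _ h1
  rw [neg_add_cancel_left] at h2
  have h3 : Cg J (-z + z * b + -b) (b + -b) :=
    cg_add_right hS hJ (hS.neg_mem hb) h2
  rw [add_neg_cancel] at h3
  exact mem_of_cg hS hJ (cg_symm hS hJ h3)

theorem cf_conj_add {z b : B} (hz : z ∈ I) (hb : b ∈ S) : Cg J (b + z + -b) z := by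
  have h1 : Cg J (z + -b) (-b + z) := cf_comm_add hcf hz (hS.neg_mem hb)
  have h2 : Cg J (b + (z + -b)) (b + (-b + z)) := cg_add_left hS hJ _ h1
  rw [add_neg_cancel_left] at h2
  rw [add_assoc]
  exact h2

theorem cf_star_left {z b : B} (hz : z ∈ I) (hb : b ∈ S) : sbStar b z ∈ J := by
  have h1 : Cg J (b * z) (z + b) := cg_symm hS hJ (cf_mul_rl hcf hz hb)
  have h2 : Cg J (-b + b * z) (-b + (z + b)) := cg_add_left hS hJ _ h1
  have h3 : Cg J (-b + z + - -b) z := cf_conj_add hS hJ hI hcf hz (hS.neg_mem hb)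
  rw [neg_neg] at h3
  rw [show -b + (z + b) = -b + z + b by rw [add_assoc]] at h2
  have h4 : Cg J (-b + b * z) z := cg_trans hS hJ h2 h3
  have h5 : Cg J (-b + b * z + -z) (z + -z) := cg_add_right hS hJ (hS.neg_mem (hI.subset hz)) h4
  rw [add_neg_cancel] at h5
  exact mem_of_cg hS hJ (cg_symm hS hJ h5)

theorem cf_comm_mul {z b : B} (hz : z ∈ I) (hb : b ∈ S) : Cg J (b * z) (z * b) :=
  cg_trans hS hJ (cg_symm hS hJ (cf_mul_rl hcf hz hb)) (cf_mul_lr hcf hz hb)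

theorem cf_mulComm_mem {z b : B} (hz : z ∈ I) (hb : b ∈ S) : mulCommutator z b ∈ J := by
  have hbz : b * z ∈ S := hS.mul_mem hb (hI.subset hz)
  have h1 : Cg J ((b*z)⁻¹ * (b * z)) ((b*z)⁻¹ * (z * b)) :=
    cg_mul_left hS hJ (hS.inv_mem hbz) (cf_comm_mul hS hJ hI hcf hz hb)
  rw [inv_mul_cancel, ← zero_eq_one] at h1
  have h2 : (b*z)⁻¹ * (z * b) = mulCommutator z b := by
    rw [mulCommutator]; group
  rw [h2] at h1
  exact mem_of_cg hS hJ h1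

end CFLemmas

/-- The set `{c + j}`. -/
def Pset (C J : Set B) : Set B := {x | ∃ c ∈ C, ∃ j ∈ J, x = c + j}

section PsetLemmas

variable {S C J : Set B} (hS : IsSubbrace S) (hC : IsSubbrace C) (hCS : C ⊆ S)
  (hJ : IsIdealIn S J)

set_option linter.unusedSectionVars false

include hS hC hCS hJ

theorem subset_Pset_left : C ⊆ Pset C J := fun c hc =>
  ⟨c, hc, 0, hJ.isSubbrace.zero_mem, by simp⟩

theorem subset_Pset_right (hC0 : (0:B) ∈ C) : J ⊆ Pset C J := fun j hj =>
  ⟨0, hC0, j, hj, by simp⟩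

theorem Pset_subset_S : Pset C J ⊆ S := by
  rintro x ⟨c, hc, j, hj, rfl⟩
  exact hS.add_mem (hCS hc) (hJ.subset hj)

theorem mem_Pset_iff_mul {x : B} : x ∈ Pset C J ↔ ∃ c ∈ C, ∃ j ∈ J, x = c * j := by
  constructor
  · rintro ⟨c, hc, j, hj, rfl⟩
    have h1 : Cg J c (c + j) := cg_of_eq_add hS hJ hj rfl
    obtain ⟨z, hz, hzz⟩ := (cg_iff_mul hS hJ (hCS hc)).1 h1
    exact ⟨c, hc, z, hz, hzz⟩
  · rintro ⟨c, hc, j, hj, rfl⟩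
    have h1 : Cg J c (c * j) := (cg_iff_mul hS hJ (hCS hc)).2 ⟨j, hj, rfl⟩
    obtain ⟨z, hz, hzz⟩ := cg_def hS hJ h1
    exact ⟨c, hc, z, hz, hzz⟩

theorem Pset_subbrace : IsSubbrace (Pset C J) := by
  constructor
  · exact ⟨0, hC.zero_mem, 0, hJ.isSubbrace.zero_mem, by simp⟩
  · rintro _ _ ⟨c₁, hc₁, j₁, hj₁, rfl⟩ ⟨c₂, hc₂, j₂, hj₂, rfl⟩
    refine ⟨c₁ + c₂, hC.add_mem hc₁ hc₂, (-c₂ + j₁ + -(-c₂)) + j₂,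
      hJ.isSubbrace.add_mem (hJ.add_conj_mem (hS.neg_mem (hCS hc₂)) hj₁) hj₂, ?_⟩
    simp [add_assoc, neg_neg]
  · rintro _ ⟨c, hc, j, hj, rfl⟩
    refine ⟨-c, hC.neg_mem hc, c + -j + -c, hJ.add_conj_mem (hCS hc) (hJ.isSubbrace.neg_mem hj), ?_⟩
    simp [add_assoc]
  · intro a b ha hb
    obtain ⟨c₁, hc₁, j₁, hj₁, rfl⟩ := (mem_Pset_iff_mul hS hC hCS hJ).1 ha
    obtain ⟨c₂, hc₂, j₂, hj₂, rfl⟩ := (mem_Pset_iff_mul hS hC hCS hJ).1 hb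
    refine (mem_Pset_iff_mul hS hC hCS hJ).2 ⟨c₁ * c₂, hC.mul_mem hc₁ hc₂,
      (c₂⁻¹ * j₁ * c₂⁻¹⁻¹) * j₂,
      hJ.isSubbrace.mul_mem (hJ.mul_conj_mem (hS.inv_mem (hCS hc₂)) hj₁) hj₂, ?_⟩
    group
  · intro a ha
    obtain ⟨c, hc, j, hj, rfl⟩ := (mem_Pset_iff_mul hS hC hCS hJ).1 ha
    refine (mem_Pset_iff_mul hS hC hCS hJ).2 ⟨c⁻¹, hC.inv_mem hc,
      c * j⁻¹ * c⁻¹, hJ.mul_conj_mem (hCS hc) (hJ.isSubbrace.inv_mem hj), ?_⟩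
    group

theorem Pset_bot : Pset C ({0} : Set B) = C := by
  ext x
  constructor
  · rintro ⟨c, hc, j, hj, rfl⟩
    rcases hj with rfl
    simpa using hc
  · intro hx
    exact ⟨x, hx, 0, rfl, by simp⟩

theorem Pset_top : Pset C S = S := by
  apply Set.Subset.antisymm
  · rintro x ⟨c, hc, j, hj, rfl⟩
    exact hS.add_mem (hCS hc) hj
  · intro s hs
    exact ⟨0, hC.zero_mem, s, hs, by simp⟩

theorem Pset_mono {J' : Set B} (h : J ⊆ J') : Pset C J ⊆ Pset C J' := by
  rintro x ⟨c, hc, j, hj, rfl⟩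
  exact ⟨c, hc, j, h hj, rfl⟩

theorem Pset_sat {x y : B} (h : Cg J x y) (hy : y ∈ Pset C J) : x ∈ Pset C J := by
  obtain ⟨z, hz, rfl⟩ := cg_def hS hJ h
  obtain ⟨c, hc, j, hj, hcj⟩ := hy
  refine ⟨c, hc, j + -z, hJ.isSubbrace.add_mem hj (hJ.isSubbrace.neg_mem hz), ?_⟩
  have : x = (x + z) + -z := by simp [add_assoc]
  rw [this, hcj, add_assoc]

end PsetLemmas

theorem sbStar_eq_lmb (a b : B) : sbStar a b = lmb a b + -b := by
  rw [lmb_eq_star_add]; simp [add_assoc]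

theorem lmb_mem_subbrace {T : Set B} (hT : IsSubbrace T) {x y : B} (hx : x ∈ T)
    (hy : y ∈ T) : lmb x y ∈ T :=
  hT.add_mem (hT.neg_mem hx) (hT.mul_mem hx hy)

section StepIdeal

variable {S C J I : Set B} (hS : IsSubbrace S) (hC : IsSubbrace C) (hCS : C ⊆ S)
  (hJ : IsIdealIn S J) (hI : IsIdealIn S I) (hJI : J ⊆ I)
  (hcf : IsCentralFactorIn S J I)

set_option linter.unusedSectionVars false

include hS hC hCS hJ

theorem Pset_conj_add {c w : B} (hc : c ∈ C) (hw : w ∈ Pset C J) :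
    c + w + -c ∈ Pset C J := by
  obtain ⟨c', hc', j, hj, rfl⟩ := hw
  have heq : c + (c' + j) + -c = (c + c' + -c) + (c + j + -c) := by
    simp [add_assoc]
  rw [heq]
  exact ⟨c + c' + -c, hC.add_mem (hC.add_mem hc hc') (hC.neg_mem hc),
    c + j + -c, hJ.add_conj_mem (hCS hc) hj, rfl⟩

theorem Pset_conj_mul {c w : B} (hc : c ∈ C) (hw : w ∈ Pset C J) :
    c * w * c⁻¹ ∈ Pset C J := by
  obtain ⟨c', hc', j, hj, rfl⟩ := (mem_Pset_iff_mul hS hC hCS hJ).1 hw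
  have heq : c * (c' * j) * c⁻¹ = (c * c' * c⁻¹) * (c * j * c⁻¹) := by group
  rw [heq]
  exact (mem_Pset_iff_mul hS hC hCS hJ).2
    ⟨c * c' * c⁻¹, hC.mul_mem (hC.mul_mem hc hc') (hC.inv_mem hc),
      c * j * c⁻¹, hJ.mul_conj_mem (hCS hc) hj, rfl⟩

include hI hJI hcf

theorem step_idealIn : IsIdealIn (Pset C I) (Pset C J) := by
  have hPJ : IsSubbrace (Pset C J) := Pset_subbrace hS hC hCS hJ
  have hPJS : Pset C J ⊆ S := Pset_subset_S hS hC hCS hJ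
  have hPIS : Pset C I ⊆ S := Pset_subset_S hS hC hCS hI
  constructor
  · exact Pset_mono hS hC hCS hJ hJI
  · exact hPJ
  · -- additive conjugation
    rintro b hb a ha
    obtain ⟨c, hc, z, hz, rfl⟩ := hb
    have haS : a ∈ S := hPJS ha
    have hzS : z ∈ S := hI.subset hz
    have h1 : Cg J (z + a) (a + z) := cf_comm_add hcf hz haS
    have h2 : Cg J (z + a + -z) (a + z + -z) :=
      cg_add_right hS hJ (hS.neg_mem hzS) h1
    rw [add_neg_cancel_right] at h2
    have hw : z + a + -z ∈ Pset C J := Pset_sat hS hC hCS hJ h2 ha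
    have heq : (c + z) + a + -(c + z) = c + (z + a + -z) + -c := by
      simp [add_assoc]
    rw [heq]
    exact Pset_conj_add hS hC hCS hJ hc hw
  · -- multiplicative conjugation
    rintro b hb a ha
    obtain ⟨c, hc, z, hz, rfl⟩ := (mem_Pset_iff_mul hS hC hCS hI).1 hb
    have haS : a ∈ S := hPJS ha
    have h1 : Cg J (z * a) (a * z) := cg_symm hS hJ (cf_comm_mul hS hJ hI hcf hz haS)
    have h2 : Cg J (z * a * z⁻¹) (a * z * z⁻¹) :=
      cg_mul_right hS hJ (hS.mul_mem (hI.subset hz) haS) (hS.inv_mem (hI.subset hz)) h1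
    rw [mul_inv_cancel_right] at h2
    have hw : z * a * z⁻¹ ∈ Pset C J := Pset_sat hS hC hCS hJ h2 ha
    have heq : (c * z) * a * (c * z)⁻¹ = c * (z * a * z⁻¹) * c⁻¹ := by group
    rw [heq]
    exact Pset_conj_mul hS hC hCS hJ hc hw
  · -- star left
    rintro b hb a ha
    obtain ⟨c, hc, z, hz, rfl⟩ := (mem_Pset_iff_mul hS hC hCS hI).1 hb
    have haS : a ∈ S := hPJS ha
    have heq : sbStar (c * z) a = lmb c (sbStar z a) + lmb c a + -a := by
      rw [sbStar_eq_lmb, lmb_comp, lmb_eq_star_add z a, lmb_add]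
    rw [heq]
    have m1 : lmb c (sbStar z a) ∈ Pset C J :=
      subset_Pset_right hS hC hCS hJ hC.zero_mem
        (lmb_memZ hJ hS (hCS hc) (cf_star_right hS hJ hI hcf hz haS))
    have m2 : lmb c a ∈ Pset C J :=
      lmb_mem_subbrace hPJ (subset_Pset_left hS hC hCS hJ hc) ha
    exact hPJ.add_mem (hPJ.add_mem m1 m2) (hPJ.neg_mem ha)
  · -- star right
    rintro a ha b hb
    obtain ⟨c', hc', j, hj, rfl⟩ := (mem_Pset_iff_mul hS hC hCS hJ).1 ha
    have hbS : b ∈ S := hPIS hb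
    have heq : sbStar (c' * j) b = lmb c' (sbStar j b) + sbStar c' b := by
      rw [sbStar_eq_lmb, lmb_comp, lmb_eq_star_add j b, lmb_add, sbStar_eq_lmb c' b,
        add_assoc]
    rw [heq]
    have m1 : lmb c' (sbStar j b) ∈ Pset C J :=
      subset_Pset_right hS hC hCS hJ hC.zero_mem
        (lmb_memZ hJ hS (hCS hc') (hJ.star_mem_right hj hbS))
    have m2 : sbStar c' b ∈ Pset C J := by
      obtain ⟨c'', hc'', z, hz, rfl⟩ := hb
      have heq2 : sbStar c' (c'' + z) = lmb c' c'' + sbStar c' z + -c'' := by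
        rw [sbStar_eq_lmb, lmb_add, lmb_eq_star_add c' z]
        simp [add_assoc, neg_add_rev]
      rw [heq2]
      have mm1 : lmb c' c'' ∈ Pset C J :=
        subset_Pset_left hS hC hCS hJ (lmb_mem_subbrace hC hc' hc'')
      have mm2 : sbStar c' z ∈ Pset C J :=
        subset_Pset_right hS hC hCS hJ hC.zero_mem
          (cf_star_left hS hJ hI hcf hz (hCS hc'))
      exact hPJ.add_mem (hPJ.add_mem mm1 mm2)
        (hPJ.neg_mem (subset_Pset_left hS hC hCS hJ hc''))
    exact hPJ.add_mem m1 m2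

end StepIdeal

/-- One step of the upper central series. -/
def zstep (Z : Set B) : Set B :=
  {a : B | ∀ b : B, -(a + b) + (b + a) ∈ Z ∧ -(a + b) + a * b ∈ Z ∧ -(a + b) + b * a ∈ Z}

theorem zstep_mono {Z Z' : Set B} (h : Z ⊆ Z') : zstep Z ⊆ zstep Z' :=
  fun a ha b => ⟨h (ha b).1, h (ha b).2.1, h (ha b).2.2⟩

theorem zstep_central (Z : Set B) :
    IsCentralFactorIn (Set.univ : Set B) Z (zstep Z) := fun _ ha b _ => ha b

theorem isIdealIn_bot : IsIdealIn (Set.univ : Set B) ({0} : Set B) := by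
  have h0 : ((0:B))⁻¹ = 0 := by rw [zero_eq_one, inv_one]
  constructor
  · simp
  · constructor
    · rfl
    · rintro a b rfl rfl; simp
    · rintro a rfl; simp
    · rintro a b rfl rfl; simp [mul_zero']
    · rintro a rfl; simp [h0]
  · rintro b _ a rfl; simp
  · rintro b _ a rfl; simp [mul_zero', ← zero_eq_one]
  · rintro b _ a rfl; simp [sbStar, mul_zero']
  · rintro a rfl b _; simp [sbStar, zero_mul']

section ZStep

variable {Z : Set B} (hZ : IsIdealIn (Set.univ : Set B) Z)

set_option linter.unusedSectionVars false

private theorem hU : IsSubbrace (Set.univ : Set B) := isSubbrace_univ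

include hZ

theorem zstep_zero_mem : (0:B) ∈ zstep Z := by
  intro b
  refine ⟨?_, ?_, ?_⟩ <;> simp [zero_mul', mul_zero', hZ.isSubbrace.zero_mem]

theorem zstep_sat {x y : B} (h : Cg Z x y) (hy : y ∈ zstep Z) : x ∈ zstep Z := by
  intro b
  have e1 : Cg Z (x + b) (y + b) := cg_add_right hU hZ trivial h
  obtain ⟨c1, c2, c3⟩ := hy b
  refine ⟨?_, ?_, ?_⟩
  · exact cg_trans hU hZ (cg_trans hU hZ e1 c1)
      (cg_add_left hU hZ b (cg_symm hU hZ h))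
  · exact cg_trans hU hZ (cg_trans hU hZ e1 c2)
      (cg_mul_right hU hZ trivial trivial (cg_symm hU hZ h))
  · exact cg_trans hU hZ (cg_trans hU hZ e1 c3)
      (cg_mul_left hU hZ trivial (cg_symm hU hZ h))

theorem zstep_supset : Z ⊆ zstep Z := fun z hz =>
  zstep_sat hZ (show Cg Z z 0 by simpa [Cg] using hZ.isSubbrace.neg_mem hz)
    (zstep_zero_mem hZ)

theorem zstep_add_mem {a a' : B} (ha : a ∈ zstep Z) (ha' : a' ∈ zstep Z) :
    a + a' ∈ zstep Z := by
  intro b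
  refine ⟨?_, ?_, ?_⟩
  · -- additive commutation
    have t2 : Cg Z (a + (a' + b)) (a + (b + a')) := cg_add_left hU hZ a (ha' b).1
    have t4 : Cg Z (a + b + a') (b + a + a') := cg_add_right hU hZ trivial (ha b).1
    simp only [add_assoc] at t2 t4 ⊢
    exact cg_trans hU hZ t2 t4
  · -- a·b form
    have u2 : Cg Z ((a+a')*b) (a*a'*b) := cg_mul_right hU hZ trivial trivial (ha a').2.1
    rw [mul_assoc] at u2
    have u5 : Cg Z (a*(a'*b)) (a*(a'+b)) :=
      cg_mul_left hU hZ trivial (cg_symm hU hZ (ha' b).2.1)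
    have u6 : Cg Z (a + (a'+b)) (a*(a'+b)) := (ha (a'+b)).2.1
    have w1 : Cg Z ((a+a')*b) (a*(a'+b)) := cg_trans hU hZ u2 u5
    simp only [add_assoc] at u6 ⊢
    exact cg_trans hU hZ u6 (cg_symm hU hZ w1)
  · -- b·a form
    have v2 : Cg Z (b*(a+a')) (b*(a*a')) := cg_mul_left hU hZ trivial (ha a').2.1
    rw [← mul_assoc] at v2
    have v5 : Cg Z ((b*a)*a') ((a+b)*a') :=
      cg_mul_right hU hZ trivial trivial (cg_symm hU hZ (ha b).2.2)
    have v6 : Cg Z (a' + (a+b)) ((a+b)*a') := (ha' (a+b)).2.2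
    have v8 : Cg Z ((a'+a)+b) ((a+a')+b) := cg_add_right hU hZ trivial (ha' a).1
    have X1 : Cg Z (b*(a+a')) (a' + (a+b)) :=
      cg_trans hU hZ (cg_trans hU hZ v2 v5) (cg_symm hU hZ v6)
    simp only [add_assoc] at X1 v8 ⊢
    exact cg_symm hU hZ (cg_trans hU hZ X1 v8)

theorem zstep_neg_cg {a : B} (ha : a ∈ zstep Z) : Cg Z a⁻¹ (-a) := by
  have h := (ha a⁻¹).2.1
  rw [mul_inv_cancel, ← zero_eq_one] at h
  simpa [Cg, neg_add_rev] using h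

theorem zstep_neg_mem {a : B} (ha : a ∈ zstep Z) : -a ∈ zstep Z := by
  have q0 : Cg Z a⁻¹ (-a) := zstep_neg_cg hZ ha
  intro b
  refine ⟨?_, ?_, ?_⟩
  · have p1 := (ha (-a+b)).1
    rw [add_neg_cancel_left] at p1
    have p2 : Cg Z (b + -a) ((-a+b)+a+-a) := cg_add_right hU hZ trivial p1
    rw [add_neg_cancel_right] at p2
    exact cg_symm hU hZ p2
  · have q1 : Cg Z (a⁻¹ * b) (-a * b) := cg_mul_right hU hZ trivial trivial q0
    have q2 := (ha (a⁻¹*b)).2.1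
    rw [mul_inv_cancel_left] at q2
    have q3 : Cg Z (-a + (a + a⁻¹*b)) (-a + b) := cg_add_left hU hZ _ q2
    rw [neg_add_cancel_left] at q3
    exact cg_trans hU hZ (cg_symm hU hZ q3) q1
  · have r0 : Cg Z (b * a⁻¹) (b * -a) := cg_mul_left hU hZ trivial q0
    have r1 := (ha (b*a⁻¹)).2.2
    rw [inv_mul_cancel_right] at r1
    have r2 : Cg Z (-a + (a + b*a⁻¹)) (-a + b) := cg_add_left hU hZ _ r1
    rw [neg_add_cancel_left] at r2
    exact cg_trans hU hZ (cg_symm hU hZ r2) r0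

theorem zstep_subbrace : IsSubbrace (zstep Z) := by
  refine ⟨zstep_zero_mem hZ, ?_, ?_, ?_, ?_⟩
  · exact fun a a' ha ha' => zstep_add_mem hZ ha ha'
  · exact fun a ha => zstep_neg_mem hZ ha
  · exact fun a a' ha ha' =>
      zstep_sat hZ (cg_symm hU hZ (ha a').2.1) (zstep_add_mem hZ ha ha')
  · exact fun a ha => zstep_sat hZ (zstep_neg_cg hZ ha) (zstep_neg_mem hZ ha)

theorem zstep_conj_cg {a : B} (b : B) (ha : a ∈ zstep Z) : Cg Z (b + a + -b) a := by
  have s1 : Cg Z (b + (a + -b)) (b + (-b + a)) := cg_add_left hU hZ b (ha (-b)).1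
  rw [add_neg_cancel_left] at s1
  rw [add_assoc]
  exact s1

theorem zstep_ideal : IsIdealIn (Set.univ : Set B) (zstep Z) := by
  refine ⟨fun _ _ => trivial, zstep_subbrace hZ, ?_, ?_, ?_, ?_⟩
  · intro b _ a ha
    exact zstep_sat hZ (zstep_conj_cg hZ b ha) ha
  · intro b _ a ha
    have m1 : Cg Z (b*a) (a*b) :=
      cg_trans hU hZ (cg_symm hU hZ (ha b).2.2) (ha b).2.1
    have m3 : Cg Z (b*a*b⁻¹) (a*b*b⁻¹) := cg_mul_right hU hZ trivial trivial m1
    rw [mul_inv_cancel_right] at m3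
    exact zstep_sat hZ m3 ha
  · intro b _ a ha
    apply zstep_supset hZ
    have sl1 : Cg Z (-b + b*a) (-b + (a+b)) :=
      cg_add_left hU hZ _ (cg_symm hU hZ (ha b).2.2)
    have sl3 : Cg Z (-b + b*a + -a) (-b + (a+b) + -a) :=
      cg_add_right hU hZ trivial sl1
    have c1 : Cg Z (-b + (a+b)) a := by
      have p : Cg Z (-b + (a+b)) (-b + (b+a)) := cg_add_left hU hZ _ (ha b).1
      rwa [neg_add_cancel_left] at p
    have c2 : Cg Z (-b + (a+b) + -a) (a + -a) := cg_add_right hU hZ trivial c1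
    rw [add_neg_cancel] at c2
    exact mem_of_cg hU hZ (cg_symm hU hZ (cg_trans hU hZ sl3 c2))
  · intro a ha b _
    apply zstep_supset hZ
    have t1 : Cg Z (-a + (a+b)) (-a + a*b) := cg_add_left hU hZ _ (ha b).2.1
    rw [neg_add_cancel_left] at t1
    have t2 : Cg Z (b + -b) (-a + a*b + -b) := cg_add_right hU hZ trivial t1
    rw [add_neg_cancel] at t2
    exact mem_of_cg hU hZ t2

end ZStep

section Zeta

theorem zetaOrd_zero : zetaOrd B 0 = ({0} : Set B) := Ordinal.limitRecOn_zero _ _ _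

theorem zetaOrd_succ (o : Ordinal.{u}) :
    zetaOrd B (o + 1) = zstep (zetaOrd B o) := by
  rw [Ordinal.add_one_eq_succ]
  exact Ordinal.limitRecOn_succ _ _ _ _

theorem zetaOrd_limit {o : Ordinal.{u}} (ho : Order.IsSuccLimit o) :
    zetaOrd B o = ⋃ (β : {β : Ordinal.{u} // β < o}), zetaOrd B β.1 :=
  Ordinal.limitRecOn_limit _ _ _ _ ho

theorem zeta_ideal_mono (o : Ordinal.{u}) :
    IsIdealIn (Set.univ : Set B) (zetaOrd B o) ∧
      ∀ β ≤ o, zetaOrd B β ⊆ zetaOrd B o := by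
  induction o using Ordinal.induction with
  | h o ih =>
    rcases Ordinal.zero_or_succ_or_isSuccLimit o with h0 | ⟨a, rfl⟩ | hlim
    · subst h0
      rw [zetaOrd_zero]
      exact ⟨isIdealIn_bot, fun β hβ => by rw [nonpos_iff_eq_zero.1 hβ, zetaOrd_zero]⟩
    · have ha : a < Order.succ a := Order.lt_succ a
      have hid := (ih a ha).1
      rw [← Ordinal.add_one_eq_succ] at *
      rw [zetaOrd_succ]
      refine ⟨zstep_ideal hid, fun β hβ => ?_⟩
      rcases eq_or_lt_of_le hβ with rfl | hlt
      · rw [zetaOrd_succ]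
      · have hle : β ≤ a := Order.lt_succ_iff.1 (by rwa [Ordinal.add_one_eq_succ] at hlt)
        exact ((ih a ha).2 β hle).trans (zstep_supset hid)
    · have hmono : ∀ β ≤ o, zetaOrd B β ⊆ zetaOrd B o := by
        intro β hβ
        rcases eq_or_lt_of_le hβ with rfl | hlt
        · exact subset_rfl
        · rw [zetaOrd_limit hlim]
          exact Set.subset_iUnion
            (fun γ : {γ : Ordinal.{u} // γ < o} => zetaOrd B γ.1) ⟨β, hlt⟩
      refine ⟨?_, hmono⟩
      have hmem : ∀ x : B, x ∈ zetaOrd B o ↔ ∃ β < o, x ∈ zetaOrd B β := by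
        intro x
        rw [zetaOrd_limit hlim]
        simp only [Set.mem_iUnion]
        exact ⟨fun ⟨⟨β, hβ⟩, hx⟩ => ⟨β, hβ, hx⟩, fun ⟨β, hβ, hx⟩ => ⟨⟨β, hβ⟩, hx⟩⟩
      have pair : ∀ x y : B, x ∈ zetaOrd B o → y ∈ zetaOrd B o →
          ∃ β < o, x ∈ zetaOrd B β ∧ y ∈ zetaOrd B β := by
        intro x y hx hy
        obtain ⟨β₁, hβ₁, hx⟩ := (hmem x).1 hx
        obtain ⟨β₂, hβ₂, hy⟩ := (hmem y).1 hy
        exact ⟨max β₁ β₂, max_lt hβ₁ hβ₂,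
          (ih _ (max_lt hβ₁ hβ₂)).2 β₁ (le_max_left _ _) hx,
          (ih _ (max_lt hβ₁ hβ₂)).2 β₂ (le_max_right _ _) hy⟩
      constructor
      · exact fun _ _ => trivial
      · constructor
        · exact (hmem 0).2 ⟨0, hlim.pos, by rw [zetaOrd_zero]; rfl⟩
        · intro x y hx hy
          obtain ⟨β, hβ, hx, hy⟩ := pair x y hx hy
          exact hmono β hβ.le ((ih β hβ).1.isSubbrace.add_mem hx hy)
        · intro x hx
          obtain ⟨β, hβ, hx⟩ := (hmem x).1 hx
          exact hmono β hβ.le ((ih β hβ).1.isSubbrace.neg_mem hx)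
        · intro x y hx hy
          obtain ⟨β, hβ, hx, hy⟩ := pair x y hx hy
          exact hmono β hβ.le ((ih β hβ).1.isSubbrace.mul_mem hx hy)
        · intro x hx
          obtain ⟨β, hβ, hx⟩ := (hmem x).1 hx
          exact hmono β hβ.le ((ih β hβ).1.isSubbrace.inv_mem hx)
      · intro b _ a ha
        obtain ⟨β, hβ, ha⟩ := (hmem a).1 ha
        exact hmono β hβ.le ((ih β hβ).1.add_conj_mem trivial ha)
      · intro b _ a ha
        obtain ⟨β, hβ, ha⟩ := (hmem a).1 ha
        exact hmono β hβ.le ((ih β hβ).1.mul_conj_mem trivial ha)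
      · intro b _ a ha
        obtain ⟨β, hβ, ha⟩ := (hmem a).1 ha
        exact hmono β hβ.le ((ih β hβ).1.star_mem_left trivial ha)
      · intro a ha b _
        obtain ⟨β, hβ, ha⟩ := (hmem a).1 ha
        exact hmono β hβ.le ((ih β hβ).1.star_mem_right ha trivial)

end Zeta

section Parts12

variable {C : Set B} (hC : IsSubbrace C)

include hC

theorem part_two (h : CentrallyNilpotent B) : IsSubideal C := by
  obtain ⟨n, I, hI0, hIn, hIdeal, hsub, hcf⟩ := h
  have hU : IsSubbrace (Set.univ : Set B) := isSubbrace_univ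
  have hCS : C ⊆ Set.univ := fun _ _ => trivial
  refine ⟨n, fun k => Pset C (I k), ?_, ?_, ?_, ?_⟩
  · show Pset C (I 0) = C
    rw [hI0, Pset_bot hU hC hCS isIdealIn_bot]
  · show Pset C (I n) = Set.univ
    rw [hIn, Pset_top hU hC hCS isIdealIn_bot]
  · intro k hk
    exact Pset_subbrace hU hC hCS (hIdeal k hk)
  · intro k hk
    exact step_idealIn hU hC hCS (hIdeal k hk.le) (hIdeal (k+1) hk)
      (hsub k hk) (hcf k hk)

theorem part_one (h : Hypercentral B) : IsAscendant C := by
  obtain ⟨o, ho⟩ := h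
  have hU : IsSubbrace (Set.univ : Set B) := isSubbrace_univ
  have hCS : C ⊆ Set.univ := fun _ _ => trivial
  refine ⟨o, fun α => Pset C (zetaOrd B α), ?_, ?_, ?_, ?_, ?_⟩
  · show Pset C (zetaOrd B 0) = C
    rw [zetaOrd_zero, Pset_bot hU hC hCS isIdealIn_bot]
  · show Pset C (zetaOrd B o) = Set.univ
    rw [ho, Pset_top hU hC hCS isIdealIn_bot]
  · intro α _
    exact Pset_subbrace hU hC hCS (zeta_ideal_mono α).1
  · intro α _
    show IsIdealIn (Pset C (zetaOrd B (α+1))) (Pset C (zetaOrd B α))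
    rw [zetaOrd_succ]
    have hid := (zeta_ideal_mono (B := B) α).1
    exact step_idealIn hU hC hCS hid (zstep_ideal hid) (zstep_supset hid)
      (zstep_central _)
  · intro μ _ hμ
    show Pset C (zetaOrd B μ) = ⋃ β < μ, Pset C (zetaOrd B β)
    ext x
    simp only [Set.mem_iUnion]
    rw [show (x ∈ Pset C (zetaOrd B μ)) = (x ∈ Pset C (⋃ (β : {β : Ordinal.{u} // β < μ}), zetaOrd B β.1)) by
      rw [← zetaOrd_limit hμ]]
    constructor
    · rintro ⟨c, hc, j, hj, rfl⟩
      obtain ⟨⟨β, hβ⟩, hjβ⟩ := Set.mem_iUnion.1 hj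
      exact ⟨β, hβ, c, hc, j, hjβ, rfl⟩
    · rintro ⟨β, hβ, c, hc, j, hj, rfl⟩
      exact ⟨c, hc, j, Set.mem_iUnion.2 ⟨⟨β, hβ⟩, hj⟩, rfl⟩

end Parts12

section Closure

theorem subbraceClosure_subbrace (E : Set B) : IsSubbrace (subbraceClosure E) := by
  constructor
  · rintro S ⟨hS, -⟩; exact hS.zero_mem
  · intro a b ha hb S hS
    exact hS.1.add_mem (ha S hS) (hb S hS)
  · intro a ha S hS
    exact hS.1.neg_mem (ha S hS)
  · intro a b ha hb S hS
    exact hS.1.mul_mem (ha S hS) (hb S hS)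
  · intro a ha S hS
    exact hS.1.inv_mem (ha S hS)

theorem subset_subbraceClosure (E : Set B) : E ⊆ subbraceClosure E :=
  fun x hx S hS => hS.2 hx

theorem subbraceClosure_min {E S : Set B} (hES : E ⊆ S) (hS : IsSubbrace S) :
    subbraceClosure E ⊆ S := fun x hx => hx S ⟨hS, hES⟩

theorem subbraceClosure_mono {E E' : Set B} (h : E ⊆ E') :
    subbraceClosure E ⊆ subbraceClosure E' :=
  subbraceClosure_min (h.trans (subset_subbraceClosure E')) (subbraceClosure_subbrace E')

theorem subbraceClosure_of_subbrace {S : Set B} (hS : IsSubbrace S) :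
    subbraceClosure S = S :=
  Set.Subset.antisymm (subbraceClosure_min subset_rfl hS) (subset_subbraceClosure S)

theorem mem_subbraceClosure_finite {E : Set B} {x : B} (hx : x ∈ subbraceClosure E) :
    ∃ F : Finset B, ↑F ⊆ E ∧ x ∈ subbraceClosure (↑F : Set B) := by
  classical
  have hU : IsSubbrace {y : B | ∃ F : Finset B, ↑F ⊆ E ∧ y ∈ subbraceClosure (↑F : Set B)} := by
    constructor
    · exact ⟨∅, by simp, (subbraceClosure_subbrace _).zero_mem⟩
    · rintro a b ⟨F₁, hF₁, ha⟩ ⟨F₂, hF₂, hb⟩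
      refine ⟨F₁ ∪ F₂, by simp [Finset.coe_union, Set.union_subset_iff, hF₁, hF₂], ?_⟩
      have h1 : subbraceClosure (↑F₁ : Set B) ⊆ subbraceClosure (↑(F₁ ∪ F₂) : Set B) :=
        subbraceClosure_mono (by simp [Finset.coe_union])
      have h2 : subbraceClosure (↑F₂ : Set B) ⊆ subbraceClosure (↑(F₁ ∪ F₂) : Set B) :=
        subbraceClosure_mono (by simp [Finset.coe_union])
      exact (subbraceClosure_subbrace _).add_mem (h1 ha) (h2 hb)
    · rintro a ⟨F₁, hF₁, ha⟩
      exact ⟨F₁, hF₁, (subbraceClosure_subbrace _).neg_mem ha⟩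
    · rintro a b ⟨F₁, hF₁, ha⟩ ⟨F₂, hF₂, hb⟩
      refine ⟨F₁ ∪ F₂, by simp [Finset.coe_union, Set.union_subset_iff, hF₁, hF₂], ?_⟩
      have h1 : subbraceClosure (↑F₁ : Set B) ⊆ subbraceClosure (↑(F₁ ∪ F₂) : Set B) :=
        subbraceClosure_mono (by simp [Finset.coe_union])
      have h2 : subbraceClosure (↑F₂ : Set B) ⊆ subbraceClosure (↑(F₁ ∪ F₂) : Set B) :=
        subbraceClosure_mono (by simp [Finset.coe_union])
      exact (subbraceClosure_subbrace _).mul_mem (h1 ha) (h2 hb)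
    · rintro a ⟨F₁, hF₁, ha⟩
      exact ⟨F₁, hF₁, (subbraceClosure_subbrace _).inv_mem ha⟩
  have hEU : E ⊆ {y : B | ∃ F : Finset B, ↑F ⊆ E ∧ y ∈ subbraceClosure (↑F : Set B)} := by
    intro y hy
    exact ⟨{y}, by simpa using hy, subset_subbraceClosure _ (by simp)⟩
  exact subbraceClosure_min hEU hU hx

end Closure

/-- Generating commutator set. -/
def Kset (X : Set B) : Set B :=
  {κ : B | (∃ a ∈ X, ∃ b ∈ X, κ = addCommutator a b) ∨
    (∃ a ∈ X, ∃ b ∈ X, κ = mulCommutator a b) ∨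
    (∃ a ∈ X, ∃ b ∈ X, κ = -(a + b) + a * b)}

theorem Kset_subset {X : Set B} (hX : IsSubbrace X) : Kset X ⊆ X := by
  rintro κ (⟨a, ha, b, hb, rfl⟩ | ⟨a, ha, b, hb, rfl⟩ | ⟨a, ha, b, hb, rfl⟩)
  · exact hX.add_mem (hX.add_mem (hX.add_mem (hX.neg_mem ha) (hX.neg_mem hb)) ha) hb
  · exact hX.mul_mem (hX.mul_mem (hX.mul_mem (hX.inv_mem ha) (hX.inv_mem hb)) ha) hb
  · exact hX.add_mem (hX.neg_mem (hX.add_mem ha hb)) (hX.mul_mem ha hb)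

theorem cg_mem_of_mem {S J T : Set B} (hS : IsSubbrace S) (hJ : IsIdealIn S J)
    (hT : IsSubbrace T) (hJT : J ⊆ T) {u v : B} (h : Cg J u v) (hv : v ∈ T) : u ∈ T := by
  obtain ⟨i, hi, rfl⟩ := cg_def hS hJ h
  have heq : u = (u + i) + -i := by simp [add_assoc]
  rw [heq]
  exact hT.add_mem hv (hT.neg_mem (hJT hi))

section CommCongr

variable {X J I : Set B} (hX : IsSubbrace X) (hJ : IsIdealIn X J) (hI : IsIdealIn X I)
  (hcf : IsCentralFactorIn X J I)

set_option linter.unusedSectionVars false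

include hX hJ hI hcf

/-- conjugation of an element of `X` by an element of `I` is trivial mod `J`. -/
theorem cf_conj_add' {z w : B} (hz : z ∈ I) (hw : w ∈ X) :
    Cg J (-z + (w + z)) w := by
  have h1 := cg_add_left hX hJ (-z) (cg_symm hX hJ (cf_comm_add hcf hz hw))
  rwa [neg_add_cancel_left] at h1

theorem cf_conj_mul' {z w : B} (hz : z ∈ I) (hw : w ∈ X) :
    Cg J (z⁻¹ * (w * z)) w := by
  have h1 := cg_mul_left hX hJ (hX.inv_mem (hI.subset hz))
    (cf_comm_mul hX hJ hI hcf hz hw)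
  rwa [inv_mul_cancel_left] at h1

theorem CC1 {x y z : B} (hx : x ∈ X) (hy : y ∈ X) (hz : z ∈ I) :
    Cg J (addCommutator x (y + z)) (addCommutator x y) := by
  have cg1 : Cg J (-z + ((-y + x + y) + z)) ((-y + x) + y) :=
    cf_conj_add' hX hJ hI hcf hz
      (hX.add_mem (hX.add_mem (hX.neg_mem hy) hx) hy)
  have cg2 := cg_add_left hX hJ (-x) cg1
  simp only [addCommutator, neg_add_rev, add_assoc] at cg2 ⊢
  exact cg2

theorem CC2 {x y z : B} (hx : x ∈ X) (hy : y ∈ X) (hz : z ∈ I) :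
    Cg J (addCommutator (x + z) y) (addCommutator x y) := by
  have c1 : Cg J (z + y) (y + z) := cf_comm_add hcf hz hy
  have c2 := cg_add_left hX hJ (-z)
    (cg_add_left hX hJ (-x) (cg_add_left hX hJ (-y) (cg_add_left hX hJ x c1)))
  -- c2 : Cg J (-z + (-x + (-y + (x + (z + y))))) (-z + (-x + (-y + (x + (y + z)))))
  have cg1 : Cg J (-z + ((-x + (-y + (x + y))) + z)) (-x + (-y + (x + y))) :=
    cf_conj_add' hX hJ hI hcf hz
      (hX.add_mem (hX.neg_mem hx)
        (hX.add_mem (hX.neg_mem hy) (hX.add_mem hx hy)))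
  simp only [add_assoc] at c2 cg1
  have := cg_trans hX hJ c2 cg1
  simp only [addCommutator, neg_add_rev, add_assoc]
  exact this

theorem CC1m {x y z : B} (hx : x ∈ X) (hy : y ∈ X) (hz : z ∈ I) :
    Cg J (mulCommutator x (y * z)) (mulCommutator x y) := by
  have cg1 : Cg J (z⁻¹ * ((y⁻¹ * x * y) * z)) ((y⁻¹ * x) * y) :=
    cf_conj_mul' hX hJ hI hcf hz
      (hX.mul_mem (hX.mul_mem (hX.inv_mem hy) hx) hy)
  have cg2 := cg_mul_left hX hJ (hX.inv_mem hx) cg1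
  simp only [mulCommutator, mul_inv_rev, mul_assoc] at cg2 ⊢
  exact cg2

theorem CC2m {x y z : B} (hx : x ∈ X) (hy : y ∈ X) (hz : z ∈ I) :
    Cg J (mulCommutator (x * z) y) (mulCommutator x y) := by
  have c1 : Cg J (z * y) (y * z) :=
    cg_symm hX hJ (cf_comm_mul hX hJ hI hcf hz hy)
  have c2 := cg_mul_left hX hJ (hX.inv_mem (hI.subset hz))
    (cg_mul_left hX hJ (hX.inv_mem hx)
      (cg_mul_left hX hJ (hX.inv_mem hy) (cg_mul_left hX hJ hx c1)))
  have cg1 : Cg J (z⁻¹ * ((x⁻¹ * (y⁻¹ * (x * y))) * z)) (x⁻¹ * (y⁻¹ * (x * y))) :=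
    cf_conj_mul' hX hJ hI hcf hz
      (hX.mul_mem (hX.inv_mem hx)
        (hX.mul_mem (hX.inv_mem hy) (hX.mul_mem hx hy)))
  simp only [mul_assoc] at c2 cg1
  have := cg_trans hX hJ c2 cg1
  simp only [mulCommutator, mul_inv_rev, mul_assoc]
  exact this

theorem CC3y {x y z : B} (hx : x ∈ X) (hy : y ∈ X) (hz : z ∈ I) :
    Cg J (-(x + (y + z)) + x * (y + z)) (-(x + y) + x * y) := by
  have hj : sbStar x z ∈ J := cf_star_left hX hJ hI hcf hz hx
  have hu : (-(x + y) + x * y) + sbStar x z ∈ X := by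
    refine hX.add_mem (hX.add_mem (hX.neg_mem (hX.add_mem hx hy)) (hX.mul_mem hx hy)) ?_
    exact hX.add_mem (hX.add_mem (hX.neg_mem hx) (hX.mul_mem hx (hI.subset hz)))
      (hX.neg_mem (hI.subset hz))
  have a1 : Cg J (-(x + y) + x * y) ((-(x + y) + x * y) + sbStar x z) :=
    cg_of_eq_add hX hJ hj rfl
  have a2 : Cg J (-z + (((-(x + y) + x * y) + sbStar x z) + z)) ((-(x + y) + x * y) + sbStar x z) :=
    cf_conj_add' hX hJ hI hcf hz hu
  have a3 := cg_trans hX hJ a2 (cg_symm hX hJ a1)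
  have heq2 : -(x + (y + z)) + x * (y + z)
      = -z + (((-(x + y) + x * y) + sbStar x z) + z) := by
    simp [sbStar, skew_distrib, neg_add_rev, add_assoc]
  rw [heq2]
  exact a3

theorem CC3x {x y z : B} (hx : x ∈ X) (hy : y ∈ X) (hz : z ∈ I) :
    Cg J (-((x * z) + y) + (x * z) * y) (-(x + y) + x * y) := by
  have hj₁ : -(z + y) + z * y ∈ J := cf_mul_lr hcf hz hy
  have hj₂ : lmb x (-(z + y) + z * y) ∈ J := lmb_memZ hJ hX hx hj₁
  have heq : -((x * z) + y) + (x * z) * y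
      = (-(x + y) + x * y) + lmb x (-(z + y) + z * y) := by
    have e1 : lmb z y = y + (-(z + y) + z * y) := by
      simp [lmb, neg_add_rev, add_assoc]
    rw [mul_eq_add_lmb (x * z) y, lmb_comp, e1, lmb_add]
    rw [mul_eq_add_lmb x y]
    simp [lmb, neg_add_rev, add_assoc]
  exact cg_symm hX hJ (cg_of_eq_add hX hJ hj₂ heq)

end CommCongr

theorem frattini_step {X H J I : Set B} (hX : IsSubbrace X) (hH : IsSubbrace H)
    (hHX : H ⊆ X) (hJ : IsIdealIn X J) (hI : IsIdealIn X I) (hJI : J ⊆ I)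
    (hcf : IsCentralFactorIn X J I) (hJH : J ⊆ H)
    (hPX : Pset H I = X) : Kset X ⊆ H := by
  have decompA : ∀ x ∈ X, ∃ h ∈ H, ∃ z ∈ I, x = h + z := by
    intro x hx; rw [← hPX] at hx; exact hx
  have decompM : ∀ x ∈ X, ∃ h ∈ H, ∃ z ∈ I, x = h * z := by
    intro x hx; rw [← hPX] at hx
    exact (mem_Pset_iff_mul hX hH hHX hI).1 hx
  rintro κ (⟨a, ha, b, hb, rfl⟩ | ⟨a, ha, b, hb, rfl⟩ | ⟨a, ha, b, hb, rfl⟩)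
  · obtain ⟨h₂, hh₂, z₂, hz₂, rfl⟩ := decompA b hb
    obtain ⟨h₁, hh₁, z₁, hz₁, rfl⟩ := decompA a ha
    have c1 : Cg J (addCommutator (h₁ + z₁) (h₂ + z₂)) (addCommutator (h₁ + z₁) h₂) :=
      CC1 hX hJ hI hcf ha (hHX hh₂) hz₂
    have c2 : Cg J (addCommutator (h₁ + z₁) h₂) (addCommutator h₁ h₂) :=
      CC2 hX hJ hI hcf (hHX hh₁) (hHX hh₂) hz₁
    have hmem : addCommutator h₁ h₂ ∈ H :=
      hH.add_mem (hH.add_mem (hH.add_mem (hH.neg_mem hh₁) (hH.neg_mem hh₂)) hh₁) hh₂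
    exact cg_mem_of_mem hX hJ hH hJH (cg_trans hX hJ c1 c2) hmem
  · obtain ⟨h₂, hh₂, z₂, hz₂, rfl⟩ := decompM b hb
    obtain ⟨h₁, hh₁, z₁, hz₁, rfl⟩ := decompM a ha
    have c1 : Cg J (mulCommutator (h₁ * z₁) (h₂ * z₂)) (mulCommutator (h₁ * z₁) h₂) :=
      CC1m hX hJ hI hcf ha (hHX hh₂) hz₂
    have c2 : Cg J (mulCommutator (h₁ * z₁) h₂) (mulCommutator h₁ h₂) :=
      CC2m hX hJ hI hcf (hHX hh₁) (hHX hh₂) hz₁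
    have hmem : mulCommutator h₁ h₂ ∈ H :=
      hH.mul_mem (hH.mul_mem (hH.mul_mem (hH.inv_mem hh₁) (hH.inv_mem hh₂)) hh₁) hh₂
    exact cg_mem_of_mem hX hJ hH hJH (cg_trans hX hJ c1 c2) hmem
  · obtain ⟨h₂, hh₂, z₂, hz₂, rfl⟩ := decompA b hb
    obtain ⟨h₁, hh₁, z₁, hz₁, rfl⟩ := decompM a ha
    have c1 : Cg J (-(h₁ * z₁ + (h₂ + z₂)) + (h₁ * z₁) * (h₂ + z₂))
        (-(h₁ * z₁ + h₂) + (h₁ * z₁) * h₂) :=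
      CC3y hX hJ hI hcf ha (hHX hh₂) hz₂
    have c2 : Cg J (-(h₁ * z₁ + h₂) + (h₁ * z₁) * h₂) (-(h₁ + h₂) + h₁ * h₂) :=
      CC3x hX hJ hI hcf (hHX hh₁) (hHX hh₂) hz₁
    have hmem : -(h₁ + h₂) + h₁ * h₂ ∈ H :=
      hH.add_mem (hH.neg_mem (hH.add_mem hh₁ hh₂)) (hH.mul_mem hh₁ hh₂)
    exact cg_mem_of_mem hX hJ hH hJH (cg_trans hX hJ c1 c2) hmem

theorem frattini {X H : Set B} (hX : IsSubbrace X) (hH : IsSubbrace H) (hHX : H ⊆ X)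
    (hcn : CentrallyNilpotentIn X)
    (hgen : subbraceClosure (H ∪ Kset X) = X) : H = X := by
  obtain ⟨n, I, hI0, hIn, hIdeal, hsub, hcf⟩ := hcn
  have key : ∀ j, j ≤ n → subbraceClosure (H ∪ I (n - j)) = X := by
    intro j
    induction j with
    | zero =>
      intro _
      rw [Nat.sub_zero, hIn]
      apply Set.Subset.antisymm
        (subbraceClosure_min (Set.union_subset hHX subset_rfl) hX)
      exact fun x hx => subset_subbraceClosure _ (Or.inr hx)
    | succ j ih =>
      intro hj
      have hprev := ih (Nat.le_of_succ_le hj)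
      rw [show n - j = (n - (j+1)) + 1 by omega] at hprev
      have hk1 : n - (j + 1) + 1 ≤ n := by omega
      have hkn : n - (j + 1) ≤ n := by omega
      have hklt : n - (j + 1) < n := by omega
      have hJ := hIdeal (n - (j+1)) hkn
      have hI1 := hIdeal (n - (j+1) + 1) hk1
      have hcfk := hcf (n - (j+1)) hklt
      have hJI := hsub (n - (j+1)) hklt
      have hHj : IsSubbrace (subbraceClosure (H ∪ I (n - (j+1)))) :=
        subbraceClosure_subbrace _
      have hHjX : subbraceClosure (H ∪ I (n - (j+1))) ⊆ X :=
        subbraceClosure_min (Set.union_subset hHX hJ.subset) hX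
      have hJHj : I (n - (j+1)) ⊆ subbraceClosure (H ∪ I (n - (j+1))) :=
        fun x hx => subset_subbraceClosure _ (Or.inr hx)
      have hHHj : H ⊆ subbraceClosure (H ∪ I (n - (j+1))) :=
        fun x hx => subset_subbraceClosure _ (Or.inl hx)
      have hY : Pset (subbraceClosure (H ∪ I (n - (j+1)))) (I (n - (j+1) + 1)) = X := by
        apply Set.Subset.antisymm
        · exact Pset_subset_S hX hHj hHjX hI1
        · rw [← hprev]
          apply subbraceClosure_min _ (Pset_subbrace hX hHj hHjX hI1)
          apply Set.union_subset
          · exact hHHj.trans (subset_Pset_left hX hHj hHjX hI1)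
          · exact subset_Pset_right hX hHj hHjX hI1 hHj.zero_mem
      have hK : Kset X ⊆ subbraceClosure (H ∪ I (n - (j+1))) :=
        frattini_step hX hHj hHjX hJ hI1 hJI hcfk hJHj hY
      apply Set.Subset.antisymm hHjX
      rw [← hgen]
      exact subbraceClosure_min (Set.union_subset hHHj hK) hHj
  have h0 := key n le_rfl
  rw [Nat.sub_self, hI0] at h0
  rw [show H ∪ ({0} : Set B) = H by
      apply Set.union_eq_self_of_subset_right
      intro x hx; rcases hx with rfl; exact hH.zero_mem,
    subbraceClosure_of_subbrace hH] at h0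
  exact h0

theorem IsSubbrace.inter {D X : Set B} (hD : IsSubbrace D) (hX : IsSubbrace X) :
    IsSubbrace (D ∩ X) :=
  ⟨⟨hD.zero_mem, hX.zero_mem⟩,
    fun _ _ ha hb => ⟨hD.add_mem ha.1 hb.1, hX.add_mem ha.2 hb.2⟩,
    fun _ ha => ⟨hD.neg_mem ha.1, hX.neg_mem ha.2⟩,
    fun _ _ ha hb => ⟨hD.mul_mem ha.1 hb.1, hX.mul_mem ha.2 hb.2⟩,
    fun _ ha => ⟨hD.inv_mem ha.1, hX.inv_mem ha.2⟩⟩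

theorem engine (hB : LocallyCentrallyNilpotent B) {D E : Set B}
    (hD : IsSubbrace D) (hE : IsSubbrace E) (hDE : D ⊆ E)
    (hmax : ∀ F : Set B, IsSubbrace F → D ⊆ F → F ⊆ E → F = D ∨ F = E)
    {d e w : B} (hd : d ∈ D) (he : e ∈ E) (hwE : w ∈ E)
    (hwX : ∀ X : Set B, IsSubbrace X → d ∈ X → e ∈ X → w ∈ X)
    (hwK : ∀ X : Set B, IsSubbrace X → d ∈ X → e ∈ X →
      w ∈ subbraceClosure ((D ∩ X) ∪ Kset X)) : w ∈ D := by
  classical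
  by_contra hw
  have hF : subbraceClosure (D ∪ {w}) = E := by
    rcases hmax (subbraceClosure (D ∪ {w})) (subbraceClosure_subbrace _)
      (fun x hx => subset_subbraceClosure _ (Or.inl hx))
      (subbraceClosure_min (Set.union_subset hDE (by simpa using hwE)) hE) with h | h
    · exact absurd (h ▸ subset_subbraceClosure (D ∪ {w}) (Or.inr rfl)) hw
    · exact h
  obtain ⟨F₀, hF₀sub, heF₀⟩ := mem_subbraceClosure_finite (hF ▸ he)
  have hXsub : IsSubbrace (subbraceClosure (↑(insert d (insert e F₀)) : Set B)) :=
    subbraceClosure_subbrace _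
  have hdX : d ∈ subbraceClosure (↑(insert d (insert e F₀)) : Set B) :=
    subset_subbraceClosure _ (by simp)
  have heX : e ∈ subbraceClosure (↑(insert d (insert e F₀)) : Set B) :=
    subset_subbraceClosure _ (by simp)
  have hwXm : w ∈ subbraceClosure (↑(insert d (insert e F₀)) : Set B) :=
    hwX _ hXsub hdX heX
  have hH : IsSubbrace (D ∩ subbraceClosure (↑(insert d (insert e F₀)) : Set B)) :=
    hD.inter hXsub
  have hT : subbraceClosure
      ((D ∩ subbraceClosure (↑(insert d (insert e F₀)) : Set B)) ∪
        Kset (subbraceClosure (↑(insert d (insert e F₀)) : Set B)))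
      = subbraceClosure (↑(insert d (insert e F₀)) : Set B) := by
    apply Set.Subset.antisymm
    · exact subbraceClosure_min
        (Set.union_subset Set.inter_subset_right (Kset_subset hXsub)) hXsub
    · apply subbraceClosure_min _ (subbraceClosure_subbrace _)
      intro x hx
      simp only [Finset.coe_insert, Set.mem_insert_iff, Finset.mem_coe] at hx
      have hsubF₀ : (↑F₀ : Set B) ⊆ subbraceClosure
          ((D ∩ subbraceClosure (↑(insert d (insert e F₀)) : Set B)) ∪
            Kset (subbraceClosure (↑(insert d (insert e F₀)) : Set B))) := by
        intro y hy
        have hyX : y ∈ subbraceClosure (↑(insert d (insert e F₀)) : Set B) :=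
          subset_subbraceClosure _ (by simp [hy])
        rcases hF₀sub hy with hyD | hyw
        · exact subset_subbraceClosure _ (Or.inl ⟨hyD, hyX⟩)
        · rcases hyw with rfl
          exact hwK _ hXsub hdX heX
      rcases hx with rfl | rfl | hx
      · exact subset_subbraceClosure _ (Or.inl ⟨hd, hdX⟩)
      · exact subbraceClosure_min hsubF₀ (subbraceClosure_subbrace _) heF₀
      · exact hsubF₀ hx
  have hfin : D ∩ subbraceClosure (↑(insert d (insert e F₀)) : Set B)
      = subbraceClosure (↑(insert d (insert e F₀)) : Set B) :=
    frattini hXsub hH Set.inter_subset_right (hB (insert d (insert e F₀))) hT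
  have : w ∈ D ∩ subbraceClosure (↑(insert d (insert e F₀)) : Set B) :=
    hfin.symm ▸ hwXm
  exact hw this.1

theorem jump_ideal (hB : LocallyCentrallyNilpotent B) {D E : Set B}
    (hD : IsSubbrace D) (hE : IsSubbrace E) (hDE : D ⊆ E)
    (hmax : ∀ F : Set B, IsSubbrace F → D ⊆ F → F ⊆ E → F = D ∨ F = E) :
    IsIdealIn E D := by
  refine ⟨hDE, hD, ?_, ?_, ?_, ?_⟩
  · -- additive conjugation
    intro b hb a ha
    refine engine hB hD hE hDE hmax ha hb ?_ ?_ ?_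
    · exact hE.add_mem (hE.add_mem hb (hDE ha)) (hE.neg_mem hb)
    · intro X hX hdX heX
      exact hX.add_mem (hX.add_mem heX hdX) (hX.neg_mem heX)
    · intro X hX hdX heX
      have h2 : addCommutator (-b) a ∈ Kset X := Or.inl ⟨-b, hX.neg_mem heX, a, hdX, rfl⟩
      have heq : b + a + -b = a + -(addCommutator (-b) a) := by
        simp [addCommutator, neg_add_rev, add_assoc]
      rw [heq]
      exact (subbraceClosure_subbrace _).add_mem
        (subset_subbraceClosure _ (Or.inl ⟨ha, hdX⟩))
        ((subbraceClosure_subbrace _).neg_mem (subset_subbraceClosure _ (Or.inr h2)))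
  · -- multiplicative conjugation
    intro b hb a ha
    refine engine hB hD hE hDE hmax ha hb ?_ ?_ ?_
    · exact hE.mul_mem (hE.mul_mem hb (hDE ha)) (hE.inv_mem hb)
    · intro X hX hdX heX
      exact hX.mul_mem (hX.mul_mem heX hdX) (hX.inv_mem heX)
    · intro X hX hdX heX
      have h2 : mulCommutator a b⁻¹ ∈ Kset X :=
        Or.inr (Or.inl ⟨a, hdX, b⁻¹, hX.inv_mem heX, rfl⟩)
      have heq : b * a * b⁻¹ = a * mulCommutator a b⁻¹ := by
        rw [mulCommutator]; group
      rw [heq]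
      exact (subbraceClosure_subbrace _).mul_mem
        (subset_subbraceClosure _ (Or.inl ⟨ha, hdX⟩))
        (subset_subbraceClosure _ (Or.inr h2))
  · -- star left
    intro b hb a ha
    refine engine hB hD hE hDE hmax ha hb ?_ ?_ ?_
    · exact hE.add_mem (hE.add_mem (hE.neg_mem hb) (hE.mul_mem hb (hDE ha)))
        (hE.neg_mem (hDE ha))
    · intro X hX hdX heX
      exact hX.add_mem (hX.add_mem (hX.neg_mem heX) (hX.mul_mem heX hdX))
        (hX.neg_mem hdX)
    · intro X hX hdX heX
      have h2 : -(b + a) + b * a ∈ Kset X := Or.inr (Or.inr ⟨b, heX, a, hdX, rfl⟩)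
      have heq : sbStar b a = a + (-(b + a) + b * a) + -a := by
        simp [sbStar, neg_add_rev, add_assoc]
      rw [heq]
      exact (subbraceClosure_subbrace _).add_mem
        ((subbraceClosure_subbrace _).add_mem
          (subset_subbraceClosure _ (Or.inl ⟨ha, hdX⟩))
          (subset_subbraceClosure _ (Or.inr h2)))
        ((subbraceClosure_subbrace _).neg_mem (subset_subbraceClosure _ (Or.inl ⟨ha, hdX⟩)))
  · -- star right
    intro a ha b hb
    refine engine hB hD hE hDE hmax ha hb ?_ ?_ ?_
    · exact hE.add_mem (hE.add_mem (hE.neg_mem (hDE ha)) (hE.mul_mem (hDE ha) hb))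
        (hE.neg_mem hb)
    · intro X hX hdX heX
      exact hX.add_mem (hX.add_mem (hX.neg_mem hdX) (hX.mul_mem hdX heX))
        (hX.neg_mem heX)
    · intro X hX hdX heX
      have hsX : -(a + b) + a * b ∈ X :=
        hX.add_mem (hX.neg_mem (hX.add_mem hdX heX)) (hX.mul_mem hdX heX)
      have h2 : -(a + b) + a * b ∈ Kset X := Or.inr (Or.inr ⟨a, hdX, b, heX, rfl⟩)
      have h3 : addCommutator (-b) (-(a + b) + a * b) ∈ Kset X :=
        Or.inl ⟨-b, hX.neg_mem heX, -(a + b) + a * b, hsX, rfl⟩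
      have heq : sbStar a b
          = (-(a + b) + a * b) + -(addCommutator (-b) (-(a + b) + a * b)) := by
        simp [sbStar, addCommutator, neg_add_rev, add_assoc]
      rw [heq]
      exact (subbraceClosure_subbrace _).add_mem
        (subset_subbraceClosure _ (Or.inr h2))
        ((subbraceClosure_subbrace _).neg_mem (subset_subbraceClosure _ (Or.inr h3)))

theorem part_three {C : Set B} (hC : IsSubbrace C) (hB : LocallyCentrallyNilpotent B) :
    IsSerial C := by
  classical
  set r : {D : Set B // IsSubbrace D ∧ C ⊆ D} → {D : Set B // IsSubbrace D ∧ C ⊆ D} → Prop :=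
    fun a b => a.1 ⊆ b.1 with hr
  set c₀ : Set {D : Set B // IsSubbrace D ∧ C ⊆ D} :=
    {⟨C, hC, subset_rfl⟩, ⟨Set.univ, isSubbrace_univ, fun _ _ => trivial⟩} with hc₀
  have hchain : IsChain r c₀ := by
    intro x hx y hy _
    rcases hx with rfl | rfl <;> rcases hy with rfl | rfl <;>
      first
        | exact Or.inl subset_rfl
        | exact Or.inl (fun _ _ => trivial)
        | exact Or.inr (fun _ _ => trivial)
  obtain ⟨M, hM, hc₀M⟩ := hchain.exists_maxChain
  refine ⟨Subtype.val '' M, ?_, ?_, ?_, ?_, ?_, ?_⟩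
  · exact ⟨⟨C, hC, subset_rfl⟩, hc₀M (Set.mem_insert _ _), rfl⟩
  · exact ⟨⟨Set.univ, isSubbrace_univ, fun _ _ => trivial⟩,
      hc₀M (Set.mem_insert_of_mem _ rfl), rfl⟩
  · rintro _ ⟨t, _, rfl⟩
    exact t.2.1
  · rintro _ ⟨t₁, ht₁, rfl⟩ _ ⟨t₂, ht₂, rfl⟩
    by_cases h : t₁ = t₂
    · subst h; exact Or.inl subset_rfl
    · exact hM.1 ht₁ ht₂ h
  · -- closure under unions and intersections
    have tool : ∀ T : Set B, IsSubbrace T → C ⊆ T →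
        (∀ G ∈ Subtype.val '' M, T ⊆ G ∨ G ⊆ T) → T ∈ Subtype.val '' M := by
      intro T hT hCT hcomp
      have hins : IsChain r (insert ⟨T, hT, hCT⟩ M) := by
        apply hM.1.insert
        intro b hb _
        exact hcomp b.1 ⟨b, hb, rfl⟩
      have := hM.2 hins (Set.subset_insert _ _)
      exact ⟨⟨T, hT, hCT⟩, by rw [this]; exact Set.mem_insert _ _, rfl⟩
    intro 𝒟 h𝒟 hne
    have hsb : ∀ D ∈ 𝒟, IsSubbrace D := by
      intro D hD
      obtain ⟨t, _, rfl⟩ := h𝒟 hD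
      exact t.2.1
    have hCsub : ∀ D ∈ 𝒟, C ⊆ D := by
      intro D hD
      obtain ⟨t, _, rfl⟩ := h𝒟 hD
      exact t.2.2
    have hcomp𝒟 : ∀ D ∈ 𝒟, ∀ G ∈ Subtype.val '' M, D ⊆ G ∨ G ⊆ D := by
      rintro D hD G ⟨t₂, ht₂, rfl⟩
      obtain ⟨t₁, ht₁, rfl⟩ := h𝒟 hD
      by_cases h : t₁ = t₂
      · subst h; exact Or.inl subset_rfl
      · exact hM.1 ht₁ ht₂ h
    obtain ⟨D₀, hD₀⟩ := hne
    constructor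
    · -- union
      apply tool
      · constructor
        · exact ⟨D₀, hD₀, (hsb D₀ hD₀).zero_mem⟩
        · rintro a b ⟨D₁, hD₁, ha⟩ ⟨D₂, hD₂, hb⟩
          rcases hcomp𝒟 D₁ hD₁ D₂ (h𝒟 hD₂) with h | h
          · exact ⟨D₂, hD₂, (hsb D₂ hD₂).add_mem (h ha) hb⟩
          · exact ⟨D₁, hD₁, (hsb D₁ hD₁).add_mem ha (h hb)⟩
        · rintro a ⟨D₁, hD₁, ha⟩
          exact ⟨D₁, hD₁, (hsb D₁ hD₁).neg_mem ha⟩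
        · rintro a b ⟨D₁, hD₁, ha⟩ ⟨D₂, hD₂, hb⟩
          rcases hcomp𝒟 D₁ hD₁ D₂ (h𝒟 hD₂) with h | h
          · exact ⟨D₂, hD₂, (hsb D₂ hD₂).mul_mem (h ha) hb⟩
          · exact ⟨D₁, hD₁, (hsb D₁ hD₁).mul_mem ha (h hb)⟩
        · rintro a ⟨D₁, hD₁, ha⟩
          exact ⟨D₁, hD₁, (hsb D₁ hD₁).inv_mem ha⟩
      · exact (hCsub D₀ hD₀).trans (Set.subset_sUnion_of_mem hD₀)
      · intro G hG
        by_cases h : ∃ D ∈ 𝒟, G ⊆ D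
        · obtain ⟨D, hD, hGD⟩ := h
          exact Or.inr (hGD.trans (Set.subset_sUnion_of_mem hD))
        · push_neg at h
          refine Or.inl (Set.sUnion_subset ?_)
          intro D hD
          rcases hcomp𝒟 D hD G hG with h' | h'
          · exact h'
          · exact absurd h' (h D hD)
    · -- intersection
      apply tool
      · constructor
        · exact fun D hD => (hsb D hD).zero_mem
        · intro a b ha hb D hD
          exact (hsb D hD).add_mem (ha D hD) (hb D hD)
        · intro a ha D hD
          exact (hsb D hD).neg_mem (ha D hD)
        · intro a b ha hb D hD
          exact (hsb D hD).mul_mem (ha D hD) (hb D hD)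
        · intro a ha D hD
          exact (hsb D hD).inv_mem (ha D hD)
      · exact fun x hx D hD => hCsub D hD hx
      · intro G hG
        by_cases h : ∀ D ∈ 𝒟, G ⊆ D
        · exact Or.inr (fun x hx D hD => h D hD hx)
        · push_neg at h
          obtain ⟨D₁, hD₁, hGD₁⟩ := h
          rcases hcomp𝒟 D₁ hD₁ G hG with h' | h'
          · exact Or.inl ((Set.sInter_subset_of_mem hD₁).trans h')
          · exact absurd h' hGD₁
  · -- jumps are ideal pairs
    intro D hD𝒞 E hE𝒞 hssub hnob
    have hDsb : IsSubbrace D := by obtain ⟨t, _, rfl⟩ := hD𝒞; exact t.2.1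
    have hEsb : IsSubbrace E := by obtain ⟨t, _, rfl⟩ := hE𝒞; exact t.2.1
    have hCD : C ⊆ D := by obtain ⟨t, _, rfl⟩ := hD𝒞; exact t.2.2
    have tool : ∀ T : Set B, IsSubbrace T → C ⊆ T →
        (∀ G ∈ Subtype.val '' M, T ⊆ G ∨ G ⊆ T) → T ∈ Subtype.val '' M := by
      intro T hT hCT hcomp
      have hins : IsChain r (insert ⟨T, hT, hCT⟩ M) := by
        apply hM.1.insert
        intro b hb _
        exact hcomp b.1 ⟨b, hb, rfl⟩
      have := hM.2 hins (Set.subset_insert _ _)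
      exact ⟨⟨T, hT, hCT⟩, by rw [this]; exact Set.mem_insert _ _, rfl⟩
    have hcomp𝒞 : ∀ G₁ ∈ Subtype.val '' M, ∀ G₂ ∈ Subtype.val '' M,
        G₁ ⊆ G₂ ∨ G₂ ⊆ G₁ := by
      rintro _ ⟨t₁, ht₁, rfl⟩ _ ⟨t₂, ht₂, rfl⟩
      by_cases h : t₁ = t₂
      · subst h; exact Or.inl subset_rfl
      · exact hM.1 ht₁ ht₂ h
    have hmax : ∀ F : Set B, IsSubbrace F → D ⊆ F → F ⊆ E → F = D ∨ F = E := by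
      intro F hF hDF hFE
      have hF𝒞 : F ∈ Subtype.val '' M := by
        apply tool F hF (hCD.trans hDF)
        intro G hG
        rcases hcomp𝒞 G hG D hD𝒞 with h | h
        · exact Or.inr (h.trans hDF)
        · rcases hcomp𝒞 G hG E hE𝒞 with h' | h'
          · -- D ⊆ G ⊆ E
            by_cases hGD : G = D
            · exact Or.inr (by rw [hGD]; exact hDF)
            · by_cases hGE : G = E
              · exact Or.inl (by rw [hGE]; exact hFE)
              · refine absurd ⟨?_, ?_⟩ (hnob G hG)
                · exact Set.ssubset_iff_subset_ne.2 ⟨h, fun hc => hGD hc.symm⟩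
                · exact Set.ssubset_iff_subset_ne.2 ⟨h', hGE⟩
          · exact Or.inl (hFE.trans h')
      by_cases hFD : F = D
      · exact Or.inl hFD
      · right
        have hDFss : D ⊂ F := Set.ssubset_iff_subset_ne.2 ⟨hDF, fun h => hFD h.symm⟩
        by_contra hFE'
        exact (hnob F hF𝒞) ⟨hDFss, Set.ssubset_iff_subset_ne.2 ⟨hFE, hFE'⟩⟩
    exact jump_ideal hB hDsb hEsb hssub.subset hmax

end Aux

end SkewBrace

open SkewBrace

/-- Subbraces of hypercentral braces are ascendant, subbraces of centrally
nilpotent braces are subideals, subbraces of locally centrally-nilpotent braces are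
serial. -/
theorem subbrace_ascendant_subideal_serial {B : Type u} [SkewBrace B]
    (C : Set B) (hC : IsSubbrace C) :
    (Hypercentral B → IsAscendant C) ∧
    (CentrallyNilpotent B → IsSubideal C) ∧
    (LocallyCentrallyNilpotent B → IsSerial C) :=
  ⟨fun h => part_one hC h, fun h => part_two hC h, fun h => part_three hC h⟩
end

section
/- Let B be a left skew brace such that the quotient B/ζ₂(B) is finite. If C is a subbrace of B of finite index (that is, both |(B,+):(C,+)| and |(B,·):(C,·)| are finite), then B/C_B is finite, where C_B denotes the largest ideal of B contained in C. -/
universe u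

open SkewBrace

namespace Statement14Aux

open SkewBrace

variable {B : Type u} [SkewBrace B]

/-- Centrality of an element. -/
def Cent (z : B) : Prop := ∀ b : B, b + z = z + b ∧ z * b = z + b ∧ b * z = z + b

lemma Cent.comm {z : B} (hz : Cent z) (b : B) : b + z = z + b := (hz b).1

lemma Cent.mulL {z : B} (hz : Cent z) (b : B) : z * b = z + b := (hz b).2.1

lemma Cent.mulR {z : B} (hz : Cent z) (b : B) : b * z = b + z :=
  ((hz b).2.2).trans ((hz b).1).symm

lemma Cent.slide {z : B} (hz : Cent z) (x y : B) : x + z + y = x + y + z := by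
  rw [add_assoc, add_assoc]
  exact congrArg (x + ·) ((hz y).1).symm

lemma zero_one : (0 : B) = 1 := SkewBrace.zero_eq_one

lemma mul_zero' (b : B) : b * (0 : B) = b := by rw [zero_one, mul_one]

lemma zero_mul' (b : B) : (0 : B) * b = b := by rw [zero_one, one_mul]

lemma skew (a b c : B) : a * (b + c) = a * b + (-a + a * c) := SkewBrace.skew_distrib a b c

lemma mul_neg' (b c : B) : b * (-c) = b + -(b * c) + b := by
  have h := skew b c (-c)
  rw [add_neg_cancel, mul_zero'] at h
  have h2 := congrArg (fun x => b + -(b * c) + x) h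
  simpa [add_assoc] using h2.symm

lemma cent_zero : Cent (0 : B) := by
  intro b
  refine ⟨by simp, by rw [zero_mul', zero_add], by rw [mul_zero', zero_add]⟩

lemma Cent.add {y z : B} (hy : Cent y) (hz : Cent z) : Cent (y + z) := by
  have hcomm : ∀ b : B, b + (y + z) = (y + z) + b := by
    intro b
    calc b + (y + z) = (b + y) + z := (add_assoc ..).symm
      _ = (y + b) + z := by rw [hy.comm b]
      _ = y + (b + z) := add_assoc ..
      _ = y + (z + b) := by rw [hz.comm b]
      _ = (y + z) + b := (add_assoc ..).symm
  intro b
  refine ⟨hcomm b, ?_, ?_⟩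
  · calc (y + z) * b = (y * z) * b := by rw [hy.mulL z]
      _ = y * (z * b) := mul_assoc ..
      _ = y * (z + b) := by rw [hz.mulL b]
      _ = y + (z + b) := hy.mulL _
      _ = (y + z) + b := (add_assoc ..).symm
  · calc b * (y + z) = b * y + (-b + b * z) := skew ..
      _ = (b + y) + (-b + (b + z)) := by rw [hy.mulR b, hz.mulR b]
      _ = b + (y + (-b + (b + z))) := add_assoc ..
      _ = b + (y + z) := by rw [neg_add_cancel_left]
      _ = (y + z) + b := hcomm b

lemma Cent.neg {z : B} (hz : Cent z) : Cent (-z) := by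
  have hcomm : ∀ b : B, b + -z = -z + b := by
    intro b
    have h : z + (b + -z) = z + (-z + b) := by
      rw [← add_assoc, ← hz.comm b, add_assoc, add_neg_cancel, add_zero,
        add_neg_cancel_left]
    exact add_left_cancel h
  intro b
  refine ⟨hcomm b, ?_, ?_⟩
  · -- (-z) * b = -z + b
    have h : z * ((-z) * b) = z * (-z + b) := by
      rw [← mul_assoc, hz.mulL (-z), add_neg_cancel, zero_mul', hz.mulL (-z + b),
        ← add_assoc, add_neg_cancel, zero_add]
    exact mul_left_cancel h
  · -- b * (-z) = -z + b
    rw [mul_neg', hz.mulR b]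
    rw [neg_add_rev]
    calc b + (-z + -b) + b = b + -z + -b + b := by rw [add_assoc b (-z) (-b)]
      _ = b + -z := by rw [add_assoc, neg_add_cancel, add_zero]
      _ = -z + b := hcomm b

/-- Deviation maps. -/
def d1 (a b : B) : B := -(a + b) + (b + a)
def d2 (a b : B) : B := -(a + b) + a * b
def d3 (a b : B) : B := -(a + b) + b * a

lemma add_d1 (a b : B) : b + a = a + b + d1 a b := by
  simp [d1, add_assoc]

lemma mul_d2 (a b : B) : a * b = a + b + d2 a b := by
  simp [d2, add_assoc]

lemma mul_d3 (a b : B) : b * a = a + b + d3 a b := by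
  simp [d3, add_assoc]

/-- The λ-map. -/
def lam (b a : B) : B := -b + b * a

def mu (a b : B) : B := -a + lam b a

lemma lam_add (b x y : B) : lam b (x + y) = lam b x + lam b y := by
  simp [lam, skew, add_assoc]

lemma lam_zero (b : B) : lam b 0 = 0 := by simp [lam, mul_zero']

lemma lam_cent {z : B} (hz : Cent z) (b : B) : lam b z = z := by
  rw [lam, hz.mulR b, neg_add_cancel_left]

lemma lam_mul (b c a : B) : lam (b * c) a = lam b (lam c a) := by
  simp only [lam, skew, mul_neg', mul_assoc]
  simp [add_assoc, neg_add_rev]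

lemma mu_eq (a b : B) : mu a b = -(d1 a b) + d3 a b := by
  simp [mu, lam, d1, d3, add_assoc, neg_add_rev]

lemma d3_eq (a b : B) : d3 a b = d1 a b + mu a b := by
  rw [mu_eq, add_neg_cancel_left]

lemma neg_add_add (a b : B) : -b + a + b = a + -(d1 a b) := by
  simp [d1, add_assoc, neg_add_rev]

/-- Z₂-style property. -/
def Z2P (a : B) : Prop := ∀ b : B, Cent (d1 a b) ∧ Cent (d2 a b) ∧ Cent (d3 a b)

lemma mem_zeta1 {z : B} : z ∈ zetaNat B 1 ↔ Cent z := by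
  have h0 : zetaNat B 0 = ({0} : Set B) := rfl
  constructor
  · intro h b
    obtain ⟨h1, h2, h3⟩ := h b
    rw [h0, Set.mem_singleton_iff, neg_add_eq_zero] at h1 h2 h3
    exact ⟨h1.symm, h2.symm, h3.symm⟩
  · intro h b
    refine ⟨?_, ?_, ?_⟩ <;> rw [h0, Set.mem_singleton_iff, neg_add_eq_zero]
    · exact ((h b).1).symm
    · exact ((h b).2.1).symm
    · exact ((h b).2.2).symm

lemma mem_zeta2 {a : B} : a ∈ zetaNat B 2 ↔ Z2P a := by
  constructor
  · intro h b
    obtain ⟨h1, h2, h3⟩ := h b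
    exact ⟨mem_zeta1.mp h1, mem_zeta1.mp h2, mem_zeta1.mp h3⟩
  · intro h b
    obtain ⟨h1, h2, h3⟩ := h b
    exact ⟨mem_zeta1.mpr h1, mem_zeta1.mpr h2, mem_zeta1.mpr h3⟩

lemma mu_cent {a : B} (ha : Z2P a) (b : B) : Cent (mu a b) := by
  rw [mu_eq]
  exact ((ha b).1.neg).add (ha b).2.2

lemma d1_cent_arg {z : B} (hz : Cent z) (b : B) : d1 z b = 0 := by
  rw [d1, (hz b).1, neg_add_cancel]

lemma d2_cent_arg {z : B} (hz : Cent z) (b : B) : d2 z b = 0 := by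
  rw [d2, (hz b).2.1, neg_add_cancel]

lemma d3_cent_arg {z : B} (hz : Cent z) (b : B) : d3 z b = 0 := by
  rw [d3, (hz b).2.2, neg_add_cancel]

lemma Cent.z2p {z : B} (hz : Cent z) : Z2P z := by
  intro b
  rw [d1_cent_arg hz, d2_cent_arg hz, d3_cent_arg hz]
  exact ⟨cent_zero, cent_zero, cent_zero⟩

lemma cent_add_mul {z : B} (hz : Cent z) (x b : B) : (x + z) * b = x * b + z := by
  calc (x + z) * b = (x * z) * b := by rw [hz.mulR x]
    _ = x * (z * b) := mul_assoc ..
    _ = x * (z + b) := by rw [hz.mulL b]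
    _ = x * (b + z) := by rw [← hz.comm b]
    _ = x * b + (-x + x * z) := skew ..
    _ = x * b + (-x + (x + z)) := by rw [hz.mulR x]
    _ = x * b + z := by rw [neg_add_cancel_left]

lemma d1_add_left {x : B} (hx : Z2P x) (y b : B) :
    d1 (x + y) b = d1 y b + d1 x b := by
  have key : b + (x + y) = (x + y) + b + (d1 y b + d1 x b) := by
    calc b + (x + y) = (b + x) + y := (add_assoc ..).symm
      _ = (x + b + d1 x b) + y := by rw [add_d1 x b]
      _ = (x + b) + y + d1 x b := ((hx b).1).slide (x + b) y
      _ = x + (b + y) + d1 x b := by rw [add_assoc x b y]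
      _ = x + (y + b + d1 y b) + d1 x b := by rw [add_d1 y b]
      _ = (x + y) + b + (d1 y b + d1 x b) := by simp [add_assoc]
  have h2 := add_d1 (x + y) b
  rw [key] at h2
  exact (add_left_cancel h2).symm

lemma d2_add_left {x y : B} (hx : Z2P x) (hy : Z2P y) (b : B) :
    d2 (x + y) b = d2 x b + d2 y b := by
  have he : Cent (d2 x y) := (hx y).2.1
  have key : (x + y) * b = (x + y) + b + (d2 x b + d2 y b) := by
    calc (x + y) * b
        = (x * y + -(d2 x y)) * b := by rw [mul_d2 x y, add_neg_cancel_right]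
      _ = (x * y) * b + -(d2 x y) := cent_add_mul he.neg (x * y) b
      _ = x * (y * b) + -(d2 x y) := by rw [mul_assoc]
      _ = x * (y + b + d2 y b) + -(d2 x y) := by rw [mul_d2 y b]
      _ = (x * (y + b) + (-x + x * (d2 y b))) + -(d2 x y) := by rw [skew x (y + b) (d2 y b)]
      _ = (x * (y + b) + d2 y b) + -(d2 x y) := by rw [((hy b).2.1).mulR x, neg_add_cancel_left]
      _ = ((x * y + (-x + x * b)) + d2 y b) + -(d2 x y) := by rw [skew x y b]
      _ = ((((x + y) + d2 x y) + (-x + (x + (b + d2 x b)))) + d2 y b) + -(d2 x y) := by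
          rw [mul_d2 x y, mul_d2 x b, add_assoc x b (d2 x b)]
      _ = ((((x + y) + d2 x y) + (b + d2 x b)) + d2 y b) + -(d2 x y) := by
          rw [neg_add_cancel_left]
      _ = ((((x + y) + (b + d2 x b)) + d2 x y) + d2 y b) + -(d2 x y) := by
          rw [he.slide (x + y) (b + d2 x b)]
      _ = ((((x + y) + (b + d2 x b)) + d2 y b) + d2 x y) + -(d2 x y) := by
          rw [he.slide ((x + y) + (b + d2 x b)) (d2 y b)]
      _ = ((x + y) + (b + d2 x b)) + d2 y b := by rw [add_neg_cancel_right]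
      _ = (x + y) + b + (d2 x b + d2 y b) := by simp [add_assoc]
  have h2 := mul_d2 (x + y) b
  rw [key] at h2
  exact (add_left_cancel h2).symm

lemma d3_add_left {x y : B} (hx : Z2P x) (hy : Z2P y) (b : B) :
    d3 (x + y) b = d3 x b + d3 y b := by
  have hd3x : Cent (d3 x b) := (hx b).2.2
  have hd3y : Cent (d3 y b) := (hy b).2.2
  have key : b * (x + y) = (x + y) + b + (d3 x b + d3 y b) := by
    calc b * (x + y) = b * x + (-b + b * y) := skew ..
      _ = (x + b + d3 x b) + (-b + (y + b + d3 y b)) := by rw [mul_d3 x b, mul_d3 y b]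
      _ = ((x + b + d3 x b) + -b) + (y + b + d3 y b) := (add_assoc ..).symm
      _ = ((x + b) + -b + d3 x b) + (y + b + d3 y b) := by rw [hd3x.slide (x + b) (-b)]
      _ = (x + d3 x b) + ((y + b) + d3 y b) := by rw [add_neg_cancel_right]
      _ = x + (d3 x b + ((y + b) + d3 y b)) := add_assoc ..
      _ = x + (((y + b) + d3 y b) + d3 x b) := by rw [← hd3x.comm ((y + b) + d3 y b)]
      _ = x + ((y + b) + (d3 y b + d3 x b)) := by rw [add_assoc (y + b) (d3 y b) (d3 x b)]
      _ = x + ((y + b) + (d3 x b + d3 y b)) := by rw [← hd3y.comm (d3 x b)]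
      _ = (x + y) + b + (d3 x b + d3 y b) := by simp [add_assoc]
  have h2 := mul_d3 (x + y) b
  rw [key] at h2
  exact (add_left_cancel h2).symm

lemma d1_neg {a : B} (ha : Z2P a) (b : B) : d1 (-a) b = -(d1 a b) := by
  have hc : Cent (d1 a b) := (ha b).1
  calc d1 (-a) b = -(-a + b) + (b + -a) := rfl
    _ = (-b + a) + (b + -a) := by rw [neg_add_rev, neg_neg]
    _ = ((-b + a) + b) + -a := (add_assoc ..).symm
    _ = (a + -(d1 a b)) + -a := by rw [neg_add_add a b]
    _ = (a + -a) + -(d1 a b) := by rw [hc.neg.slide a (-a)]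
    _ = -(d1 a b) := by rw [add_neg_cancel, zero_add]

lemma neg_mul_eq {a : B} (ha : Z2P a) (b : B) : (-a) * b = -a + (b + -(d2 a b)) := by
  have he : Cent (d2 a (-a)) := (ha (-a)).2.1
  have hd : Cent (d2 a b) := (ha b).2.1
  refine mul_left_cancel (a := a) ?_
  have hl : a * ((-a) * b) = d2 a (-a) + b := by
    calc a * ((-a) * b) = (a * -a) * b := (mul_assoc ..).symm
      _ = (a + -a + d2 a (-a)) * b := by rw [mul_d2 a (-a)]
      _ = (d2 a (-a)) * b := by rw [add_neg_cancel, zero_add]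
      _ = d2 a (-a) + b := he.mulL b
  have hr : a * (-a + (b + -(d2 a b))) = d2 a (-a) + b := by
    calc a * (-a + (b + -(d2 a b)))
        = a * -a + (-a + a * (b + -(d2 a b))) := skew ..
      _ = a * -a + (-a + (a * b + (-a + a * (-(d2 a b))))) := by rw [skew a b (-(d2 a b))]
      _ = a * -a + (-a + (a * b + (-a + (a + -(d2 a b))))) := by rw [hd.neg.mulR a]
      _ = a * -a + (-a + (a * b + -(d2 a b))) := by rw [neg_add_cancel_left]
      _ = a * -a + (-a + ((a + b + d2 a b) + -(d2 a b))) := by rw [mul_d2 a b]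
      _ = a * -a + (-a + (a + b)) := by rw [add_neg_cancel_right]
      _ = a * -a + b := by rw [neg_add_cancel_left]
      _ = (a + -a + d2 a (-a)) + b := by rw [mul_d2 a (-a)]
      _ = d2 a (-a) + b := by rw [add_neg_cancel, zero_add]
  rw [hl, hr]

lemma d2_neg {a : B} (ha : Z2P a) (b : B) : d2 (-a) b = -(d2 a b) := by
  rw [d2, neg_mul_eq ha b]
  simp [neg_add_rev, add_assoc]

lemma d3_neg {a : B} (ha : Z2P a) (b : B) : d3 (-a) b = -(d3 a b) := by
  have hc : Cent (d3 a b) := (ha b).2.2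
  calc d3 (-a) b = -(-a + b) + b * (-a) := rfl
    _ = (-b + a) + (b + -(b * a) + b) := by rw [mul_neg', neg_add_rev, neg_neg]
    _ = (-b + a) + (b + (-(d3 a b) + (-b + -a)) + b) := by rw [mul_d3 a b, neg_add_rev, neg_add_rev]
    _ = -(d3 a b) := by
        simp only [add_assoc]
        rw [← hc.neg.comm (-b + (-a + b))]
        simp [add_assoc]

lemma d1_add_right {a : B} (ha : Z2P a) (b c : B) : d1 a (b + c) = d1 a b + d1 a c := by
  have key : (b + c) + a = a + (b + c) + (d1 a b + d1 a c) := by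
    calc (b + c) + a = b + (c + a) := add_assoc ..
      _ = b + (a + c + d1 a c) := by rw [add_d1 a c]
      _ = (b + a) + (c + d1 a c) := by simp [add_assoc]
      _ = (a + b + d1 a b) + (c + d1 a c) := by rw [add_d1 a b]
      _ = ((a + b) + d1 a b + c) + d1 a c := by simp [add_assoc]
      _ = ((a + b) + c + d1 a b) + d1 a c := by rw [((ha b).1).slide (a + b) c]
      _ = a + (b + c) + (d1 a b + d1 a c) := by simp [add_assoc]
  have h2 := add_d1 a (b + c)
  rw [key] at h2
  exact (add_left_cancel h2).symm

lemma d2_add_right {a : B} (ha : Z2P a) (b c : B) : d2 a (b + c) = d2 a b + d2 a c := by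
  have key : a * (b + c) = a + (b + c) + (d2 a b + d2 a c) := by
    calc a * (b + c) = a * b + (-a + a * c) := skew ..
      _ = (a + b + d2 a b) + (-a + (a + c + d2 a c)) := by rw [mul_d2 a b, mul_d2 a c]
      _ = (a + b + d2 a b) + (-a + (a + (c + d2 a c))) := by rw [add_assoc a c (d2 a c)]
      _ = (a + b + d2 a b) + (c + d2 a c) := by rw [neg_add_cancel_left]
      _ = ((a + b) + d2 a b + c) + d2 a c := by simp [add_assoc]
      _ = ((a + b) + c + d2 a b) + d2 a c := by rw [((ha b).2.1).slide (a + b) c]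
      _ = a + (b + c) + (d2 a b + d2 a c) := by simp [add_assoc]
  have h2 := mul_d2 a (b + c)
  rw [key] at h2
  exact (add_left_cancel h2).symm

lemma lam_eq (a b : B) : lam b a = a + mu a b := by rw [mu, add_neg_cancel_left]

lemma mu_mul_right {a : B} (ha : Z2P a) (b c : B) : mu a (b * c) = mu a b + mu a c := by
  have hc : Cent (mu a c) := mu_cent ha c
  calc mu a (b * c) = -a + lam (b * c) a := rfl
    _ = -a + lam b (lam c a) := by rw [lam_mul]
    _ = -a + lam b (a + mu a c) := by rw [lam_eq a c]
    _ = -a + (lam b a + lam b (mu a c)) := by rw [lam_add]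
    _ = -a + (lam b a + mu a c) := by rw [lam_cent hc b]
    _ = (-a + lam b a) + mu a c := (add_assoc ..).symm
    _ = mu a b + mu a c := rfl

lemma mu_add_left {x : B} (hx : Z2P x) (y b : B) : mu (x + y) b = mu x b + mu y b := by
  have hc : Cent (mu x b) := mu_cent hx b
  calc mu (x + y) b = -(x + y) + lam b (x + y) := rfl
    _ = (-y + -x) + (lam b x + lam b y) := by rw [neg_add_rev, lam_add]
    _ = -y + ((-x + lam b x) + lam b y) := by simp [add_assoc]
    _ = -y + (mu x b + lam b y) := rfl
    _ = -y + (lam b y + mu x b) := by rw [← hc.comm (lam b y)]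
    _ = (-y + lam b y) + mu x b := (add_assoc ..).symm
    _ = mu x b + mu y b := hc.comm (mu y b)

lemma mu_zero (b : B) : mu 0 b = 0 := by simp [mu, lam_zero]

lemma mu_neg {a : B} (ha : Z2P a) (b : B) : mu (-a) b = -(mu a b) := by
  have h := mu_add_left ha (-a) b
  rw [add_neg_cancel, mu_zero] at h
  exact (neg_eq_of_add_eq_zero_right h.symm).symm

lemma Z2P.add {x y : B} (hx : Z2P x) (hy : Z2P y) : Z2P (x + y) := by
  intro b
  rw [d1_add_left hx y b, d2_add_left hx hy b, d3_add_left hx hy b]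
  exact ⟨((hy b).1).add (hx b).1, ((hx b).2.1).add (hy b).2.1, ((hx b).2.2).add (hy b).2.2⟩

lemma Z2P.neg {a : B} (ha : Z2P a) : Z2P (-a) := by
  intro b
  rw [d1_neg ha b, d2_neg ha b, d3_neg ha b]
  exact ⟨((ha b).1).neg, ((ha b).2.1).neg, ((ha b).2.2).neg⟩

lemma conj_add_eq {a : B} (ha : Z2P a) (b : B) : b + a + -b = a + d1 a b := by
  have hc : Cent (d1 a b) := (ha b).1
  calc b + a + -b = (a + b + d1 a b) + -b := by rw [add_d1 a b]
    _ = (a + b) + -b + d1 a b := hc.slide (a + b) (-b)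
    _ = a + d1 a b := by rw [add_neg_cancel_right]

lemma conj_mul_eq {a : B} (ha : Z2P a) (b : B) :
    b * a * b⁻¹ = a + (-(d2 a b) + d3 a b) := by
  have hd2 : Cent (d2 a b) := (ha b).2.1
  have h : (a + (-(d2 a b) + d3 a b)) * b = b * a := by
    calc (a + (-(d2 a b) + d3 a b)) * b
        = a * b + (-(d2 a b) + d3 a b) := cent_add_mul (hd2.neg.add (ha b).2.2) a b
      _ = ((a + b) + d2 a b) + (-(d2 a b) + d3 a b) := by rw [mul_d2 a b]
      _ = (a + b) + d3 a b := by rw [add_assoc, add_neg_cancel_left]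
      _ = b * a := by rw [mul_d3 a b]
  rw [← h, mul_inv_cancel_right]

lemma star_right_eq {a : B} (ha : Z2P a) (b : B) : sbStar a b = d2 a b := by
  have hd2 : Cent (d2 a b) := (ha b).2.1
  calc sbStar a b = -a + a * b + -b := rfl
    _ = -a + (a + (b + d2 a b)) + -b := by rw [mul_d2 a b, add_assoc a b (d2 a b)]
    _ = (b + d2 a b) + -b := by rw [neg_add_cancel_left]
    _ = b + -b + d2 a b := hd2.slide b (-b)
    _ = d2 a b := by rw [add_neg_cancel, zero_add]

lemma star_left_eq {a : B} (ha : Z2P a) (b : B) : sbStar b a = -(d1 a b) + d3 a b := by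
  have hd3 : Cent (d3 a b) := (ha b).2.2
  have hd1 : Cent (d1 a b) := (ha b).1
  calc sbStar b a = -b + b * a + -a := rfl
    _ = -b + (a + b + d3 a b) + -a := by rw [mul_d3 a b]
    _ = (-b + (a + b)) + d3 a b + -a := by simp [add_assoc]
    _ = (-b + (a + b)) + -a + d3 a b := hd3.slide _ (-a)
    _ = ((-b + a) + b) + -a + d3 a b := by rw [← add_assoc (-b) a b]
    _ = (a + -(d1 a b)) + -a + d3 a b := by rw [neg_add_add a b]
    _ = (a + -a) + -(d1 a b) + d3 a b := by rw [hd1.neg.slide a (-a)]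
    _ = -(d1 a b) + d3 a b := by rw [add_neg_cancel, zero_add]

lemma inv_eq {a : B} (ha : Z2P a) : a⁻¹ = -a + -(d2 a (-a)) := by
  have he : Cent (d2 a (-a)) := (ha (-a)).2.1
  have h : a * (-a + -(d2 a (-a))) = 1 := by
    calc a * (-a + -(d2 a (-a)))
        = a * -a + (-a + a * (-(d2 a (-a)))) := skew ..
      _ = a * -a + (-a + (a + -(d2 a (-a)))) := by rw [he.neg.mulR a]
      _ = a * -a + -(d2 a (-a)) := by rw [neg_add_cancel_left]
      _ = (a + -a + d2 a (-a)) + -(d2 a (-a)) := by rw [mul_d2 a (-a)]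
      _ = (0 : B) := by rw [add_neg_cancel, zero_add, add_neg_cancel]
      _ = 1 := zero_one
  exact (eq_inv_of_mul_eq_one_right h).symm

lemma exists_finset_rep {B : Type u} [AddGroup B] {I : Set B} {T : Type v} [Finite T]
    (θ : B → T) (hθ : ∀ b b' : B, θ b = θ b' → -b' + b ∈ I) :
    ∃ F : Finset B, ∀ b : B, ∃ f ∈ F, -f + b ∈ I := by
  classical
  haveI := Fintype.ofFinite T
  refine ⟨Finset.univ.image (fun t : T => if h : ∃ b : B, θ b = t then h.choose else 0),
    fun b => ⟨_, Finset.mem_image_of_mem _ (Finset.mem_univ (θ b)), ?_⟩⟩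
  have hex : ∃ b' : B, θ b' = θ b := ⟨b, rfl⟩
  refine hθ b _ ?_
  rw [dif_pos hex]
  exact hex.choose_spec.symm

end Statement14Aux

open Statement14Aux

/-- If `B/ζ₂(B)` is finite, then any finite-index subbrace `C` has
`B/C_B` finite, where `C_B` is the largest ideal of `B` contained in `C`. -/
theorem finite_index_core {B : Type u} [SkewBrace B]
    (h2 : ∃ F : Finset B, ∀ b : B, ∃ f ∈ F, -f + b ∈ zetaNat B 2)
    (C : Set B) (hC : IsSubbrace C)
    (hadd : ∃ F : Finset B, ∀ b : B, ∃ f ∈ F, -f + b ∈ C)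
    (hmul : ∃ F : Finset B, ∀ b : B, ∃ f ∈ F, f⁻¹ * b ∈ C) :
    ∃ F : Finset B, ∀ b : B, ∃ f ∈ F, -f + b ∈ idealCore C := by
  classical
  obtain ⟨F1, hF1⟩ := hadd
  obtain ⟨F2, hF2⟩ := h2
  obtain ⟨F3, hF3⟩ := hmul
  choose r1 hr1F hr1 using hF1
  choose r2 hr2F hr2 using hF2
  choose r3 hr3F hr3 using hF3
  let D : Set B := {z | z ∈ C ∧ Cent z}
  let I : Set B := {a | a ∈ C ∧ Z2P a ∧ ∀ b : B, d1 a b ∈ D ∧ d2 a b ∈ D ∧ mu a b ∈ D}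
  have hD0 : (0 : B) ∈ D := ⟨hC.zero_mem, cent_zero⟩
  have hDadd : ∀ {x y : B}, x ∈ D → y ∈ D → x + y ∈ D := fun hx hy =>
    ⟨hC.add_mem hx.1 hy.1, hx.2.add hy.2⟩
  have hDneg : ∀ {x : B}, x ∈ D → -x ∈ D := fun hx => ⟨hC.neg_mem hx.1, hx.2.neg⟩
  have hDI : D ⊆ I := by
    intro z hz
    refine ⟨hz.1, hz.2.z2p, fun b => ?_⟩
    have hmu0 : mu z b = 0 := by
      rw [mu_eq, d1_cent_arg hz.2, d3_cent_arg hz.2, neg_zero, zero_add]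
    rw [d1_cent_arg hz.2, d2_cent_arg hz.2, hmu0]
    exact ⟨hD0, hD0, hD0⟩
  have hIC : I ⊆ C := fun x hx => hx.1
  have hIadd : ∀ {x y : B}, x ∈ I → y ∈ I → x + y ∈ I := by
    intro x y hx hy
    refine ⟨hC.add_mem hx.1 hy.1, hx.2.1.add hy.2.1, fun b => ?_⟩
    rw [d1_add_left hx.2.1 y b, d2_add_left hx.2.1 hy.2.1 b, mu_add_left hx.2.1 y b]
    exact ⟨hDadd (hy.2.2 b).1 (hx.2.2 b).1, hDadd (hx.2.2 b).2.1 (hy.2.2 b).2.1,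
      hDadd (hx.2.2 b).2.2 (hy.2.2 b).2.2⟩
  have hIneg : ∀ {x : B}, x ∈ I → -x ∈ I := by
    intro x hx
    refine ⟨hC.neg_mem hx.1, hx.2.1.neg, fun b => ?_⟩
    rw [d1_neg hx.2.1 b, d2_neg hx.2.1 b, mu_neg hx.2.1 b]
    exact ⟨hDneg (hx.2.2 b).1, hDneg (hx.2.2 b).2.1, hDneg (hx.2.2 b).2.2⟩
  have hI0 : (0 : B) ∈ I := hDI hD0
  have hd3D : ∀ {x : B}, x ∈ I → ∀ b : B, d3 x b ∈ D := by
    intro x hx b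
    rw [d3_eq]
    exact hDadd (hx.2.2 b).1 (hx.2.2 b).2.2
  have hImul : ∀ {x y : B}, x ∈ I → y ∈ I → x * y ∈ I := by
    intro x y hx hy
    have h := mul_d2 x y
    rw [show x * y = x + y + d2 x y from mul_d2 x y]
    exact hIadd (hIadd hx hy) (hDI (hx.2.2 y).2.1)
  have hIinv : ∀ {x : B}, x ∈ I → x⁻¹ ∈ I := by
    intro x hx
    rw [inv_eq hx.2.1]
    exact hIadd (hIneg hx) (hDI (hDneg (hx.2.2 (-x)).2.1))
  have hIdeal : IsIdeal I := by
    refine ⟨Set.subset_univ _, ⟨hI0, fun a b ha hb => hIadd ha hb, fun a ha => hIneg ha,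
      fun a b ha hb => hImul ha hb, fun a ha => hIinv ha⟩, ?_, ?_, ?_, ?_⟩
    · intro b _ a ha
      rw [conj_add_eq ha.2.1 b]
      exact hIadd ha (hDI (ha.2.2 b).1)
    · intro b _ a ha
      rw [conj_mul_eq ha.2.1 b]
      exact hIadd ha (hDI (hDadd (hDneg (ha.2.2 b).2.1) (hd3D ha b)))
    · intro b _ a ha
      rw [star_left_eq ha.2.1 b]
      exact hDI (hDadd (hDneg (ha.2.2 b).1) (hd3D ha b))
    · intro a ha b _
      rw [star_right_eq ha.2.1 b]
      exact hDI (ha.2.2 b).2.1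
  have hIcore : I ⊆ idealCore C := fun a ha => ⟨I, ⟨hIdeal, hIC⟩, ha⟩
  have hCcos : ∀ {x y : B}, r1 x = r1 y → -y + x ∈ C := by
    intro x y h
    have h1 : -y + r1 y ∈ C := by
      have := hC.neg_mem (hr1 y)
      rwa [neg_add_rev, neg_neg] at this
    have h2' : -(r1 x) + x ∈ C := hr1 x
    rw [h] at h2'
    have h3 : (-y + r1 y) + (-(r1 y) + x) ∈ C := hC.add_mem h1 h2'
    rwa [add_assoc, add_neg_cancel_left] at h3
  have keyD : ∀ {z z' : B}, Cent z → Cent z' → r1 z = r1 z' → -z' + z ∈ D := by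
    intro z z' hz hz' h
    exact ⟨hCcos h, hz'.neg.add hz⟩
  let T := ({x // x ∈ F1} × {x // x ∈ F2}) ×
    (({x // x ∈ F1} → {x // x ∈ F1} × {x // x ∈ F1}) × ({x // x ∈ F3} → {x // x ∈ F1}))
  let θ : B → T := fun b =>
    ((⟨r1 b, hr1F b⟩, ⟨r2 b, hr2F b⟩),
     (fun f => (⟨r1 (d1 (-(r2 b) + b) f.1), hr1F _⟩, ⟨r1 (d2 (-(r2 b) + b) f.1), hr1F _⟩),
      fun g => ⟨r1 (mu (-(r2 b) + b) g.1), hr1F _⟩))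
  have hθ : ∀ b b' : B, θ b = θ b' → -b' + b ∈ I := by
    intro b b' h
    have e1 : r1 b = r1 b' := congrArg (fun p : T => p.1.1.1) h
    have e2 : r2 b = r2 b' := congrArg (fun p : T => p.1.2.1) h
    have e3 : ∀ f : {x // x ∈ F1},
        r1 (d1 (-(r2 b) + b) f.1) = r1 (d1 (-(r2 b') + b') f.1) ∧
        r1 (d2 (-(r2 b) + b) f.1) = r1 (d2 (-(r2 b') + b') f.1) :=
      fun f => ⟨congrArg (fun p : T => (p.2.1 f).1.1) h, congrArg (fun p : T => (p.2.1 f).2.1) h⟩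
    have e4 : ∀ g : {x // x ∈ F3},
        r1 (mu (-(r2 b) + b) g.1) = r1 (mu (-(r2 b') + b') g.1) :=
      fun g => congrArg (fun p : T => (p.2.2 g).1) h
    set a : B := -(r2 b) + b with hadef
    set a' : B := -(r2 b') + b' with ha'def
    have hZa : Z2P a := mem_zeta2.mp (hr2 b)
    have hZa' : Z2P a' := mem_zeta2.mp (hr2 b')
    have key : -a' + a = -b' + b := by
      rw [hadef, ha'def, ← e2]
      simp [neg_add_rev, add_assoc]
    rw [← key]
    have hxC : -a' + a ∈ C := by rw [key]; exact hCcos e1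
    have hxZ : Z2P (-a' + a) := hZa'.neg.add hZa
    have hf1 : ∀ f : {x // x ∈ F1}, d1 (-a' + a) f.1 ∈ D := by
      intro f
      rw [d1_add_left hZa'.neg a f.1, d1_neg hZa' f.1]
      have hcomm : d1 a f.1 + -(d1 a' f.1) = -(d1 a' f.1) + d1 a f.1 :=
        ((hZa' f.1).1.neg).comm (d1 a f.1)
      rw [hcomm]
      exact keyD (hZa f.1).1 (hZa' f.1).1 (e3 f).1
    have hf2 : ∀ f : {x // x ∈ F1}, d2 (-a' + a) f.1 ∈ D := by
      intro f
      rw [d2_add_left hZa'.neg hZa f.1, d2_neg hZa' f.1]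
      exact keyD (hZa f.1).2.1 (hZa' f.1).2.1 (e3 f).2
    have hf4 : ∀ g : {x // x ∈ F3}, mu (-a' + a) g.1 ∈ D := by
      intro g
      rw [mu_add_left hZa'.neg a g.1, mu_neg hZa' g.1]
      exact keyD (mu_cent hZa g.1) (mu_cent hZa' g.1) (e4 g)
    refine ⟨hxC, hxZ, fun c => ?_⟩
    have hd1c : d1 (-a' + a) c ∈ D := by
      have hcc : -(r1 c) + c ∈ C := hr1 c
      have hsplit := d1_add_right hxZ (r1 c) (-(r1 c) + c)
      rw [add_neg_cancel_left] at hsplit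
      rw [hsplit]
      refine hDadd (hf1 ⟨r1 c, hr1F c⟩) ⟨?_, (hxZ (-(r1 c) + c)).1⟩
      exact hC.add_mem (hC.neg_mem (hC.add_mem hxC hcc)) (hC.add_mem hcc hxC)
    have hd2c : d2 (-a' + a) c ∈ D := by
      have hcc : -(r1 c) + c ∈ C := hr1 c
      have hsplit := d2_add_right hxZ (r1 c) (-(r1 c) + c)
      rw [add_neg_cancel_left] at hsplit
      rw [hsplit]
      refine hDadd (hf2 ⟨r1 c, hr1F c⟩) ⟨?_, (hxZ (-(r1 c) + c)).2.1⟩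
      exact hC.add_mem (hC.neg_mem (hC.add_mem hxC hcc)) (hC.mul_mem hxC hcc)
    have hmuc : mu (-a' + a) c ∈ D := by
      have hcc : (r3 c)⁻¹ * c ∈ C := hr3 c
      have hsplit := mu_mul_right hxZ (r3 c) ((r3 c)⁻¹ * c)
      rw [mul_inv_cancel_left] at hsplit
      rw [hsplit]
      refine hDadd (hf4 ⟨r3 c, hr3F c⟩) ⟨?_, mu_cent hxZ _⟩
      exact hC.add_mem (hC.neg_mem hxC) (hC.add_mem (hC.neg_mem hcc) (hC.mul_mem hcc hxC))
    exact ⟨hd1c, hd2c, hmuc⟩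
  obtain ⟨F, hF⟩ := exists_finset_rep θ hθ
  exact ⟨F, fun b => (hF b).imp fun f hf => ⟨hf.1, hIcore hf.2⟩⟩
end

section
/- Let I, J, K be ideals of a left skew brace B. Then [I, JK]^B = [I, J+K]^B = [I,J]^B + [I,K]^B = [I,J]^B · [I,K]^B, where J+K = JK is the ideal generated by J and K and the sum of two ideals is the subgroup of (B,+) they generate. -/
universe u

open SkewBrace

namespace SkewBrace

variable {B : Type u} [SkewBrace B]

theorem sb_mul_eq' (a b : B) : a * b = a + (sbStar a b + b) := by
  simp [sbStar, add_assoc]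

theorem sb_inv_mul_add' (a b : B) : a⁻¹ * (a + b) = sbStar a⁻¹ b + b := by
  rw [SkewBrace.skew_distrib, inv_mul_cancel, ← SkewBrace.zero_eq_one]
  simp [sbStar, add_assoc]

theorem IsIdeal.memZero {L : Set B} (h : IsIdeal L) : (0:B) ∈ L := h.isSubbrace.zero_mem
theorem IsIdeal.memAdd {L : Set B} (h : IsIdeal L) {a b : B} (ha : a ∈ L) (hb : b ∈ L) :
    a + b ∈ L := h.isSubbrace.add_mem ha hb
theorem IsIdeal.memNeg {L : Set B} (h : IsIdeal L) {a : B} (ha : a ∈ L) : -a ∈ L :=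
  h.isSubbrace.neg_mem ha
theorem IsIdeal.memMul {L : Set B} (h : IsIdeal L) {a b : B} (ha : a ∈ L) (hb : b ∈ L) :
    a * b ∈ L := h.isSubbrace.mul_mem ha hb
theorem IsIdeal.memInv {L : Set B} (h : IsIdeal L) {a : B} (ha : a ∈ L) : a⁻¹ ∈ L :=
  h.isSubbrace.inv_mem ha
theorem IsIdeal.conjAdd {L : Set B} (h : IsIdeal L) (b : B) {a : B} (ha : a ∈ L) :
    b + a + -b ∈ L := h.add_conj_mem (Set.mem_univ b) ha
theorem IsIdeal.conjMul {L : Set B} (h : IsIdeal L) (b : B) {a : B} (ha : a ∈ L) :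
    b * a * b⁻¹ ∈ L := h.mul_conj_mem (Set.mem_univ b) ha
theorem IsIdeal.starL {L : Set B} (h : IsIdeal L) (b : B) {a : B} (ha : a ∈ L) :
    sbStar b a ∈ L := h.star_mem_left (Set.mem_univ b) ha
theorem IsIdeal.starR {L : Set B} (h : IsIdeal L) {a : B} (ha : a ∈ L) (b : B) :
    sbStar a b ∈ L := h.star_mem_right ha (Set.mem_univ b)

def IsSubbrace.toAddSubgroup {S : Set B} (h : IsSubbrace S) : AddSubgroup B where
  carrier := S
  zero_mem' := h.zero_mem
  add_mem' := fun ha hb => h.add_mem ha hb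
  neg_mem' := fun ha => h.neg_mem ha

def IsSubbrace.toSubgroup {S : Set B} (h : IsSubbrace S) : Subgroup B where
  carrier := S
  one_mem' := SkewBrace.zero_eq_one (B := B) ▸ h.zero_mem
  mul_mem' := fun ha hb => h.mul_mem ha hb
  inv_mem' := fun ha => h.inv_mem ha

theorem isIdeal_univ : IsIdeal (Set.univ : Set B) :=
  ⟨subset_rfl,
   ⟨trivial, fun _ _ _ _ => trivial, fun _ _ => trivial, fun _ _ _ _ => trivial,
    fun _ _ => trivial⟩,
   fun _ _ _ _ => trivial, fun _ _ _ _ => trivial, fun _ _ _ _ => trivial,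
   fun _ _ _ _ => trivial⟩

theorem subset_idealClosure (E : Set B) : E ⊆ idealClosure E :=
  fun _ hx => Set.mem_sInter.2 fun _ hI => hI.2 hx

theorem idealClosure_le {E L : Set B} (hL : IsIdeal L) (h : E ⊆ L) : idealClosure E ⊆ L :=
  fun _ hx => Set.mem_sInter.1 hx L ⟨hL, h⟩

theorem idealClosure_mono {E F : Set B} (h : E ⊆ F) : idealClosure E ⊆ idealClosure F :=
  fun _ hx => Set.mem_sInter.2 fun T hT =>
    Set.mem_sInter.1 hx T ⟨hT.1, h.trans hT.2⟩

theorem isIdeal_idealClosure (E : Set B) : IsIdeal (idealClosure E) := by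
  refine ⟨Set.subset_univ _, ⟨?_, ?_, ?_, ?_, ?_⟩, ?_, ?_, ?_, ?_⟩
  · exact Set.mem_sInter.2 fun T hT => hT.1.memZero
  · exact fun a b ha hb => Set.mem_sInter.2 fun T hT =>
      hT.1.memAdd (Set.mem_sInter.1 ha T hT) (Set.mem_sInter.1 hb T hT)
  · exact fun a ha => Set.mem_sInter.2 fun T hT => hT.1.memNeg (Set.mem_sInter.1 ha T hT)
  · exact fun a b ha hb => Set.mem_sInter.2 fun T hT =>
      hT.1.memMul (Set.mem_sInter.1 ha T hT) (Set.mem_sInter.1 hb T hT)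
  · exact fun a ha => Set.mem_sInter.2 fun T hT => hT.1.memInv (Set.mem_sInter.1 ha T hT)
  · exact fun b _ a ha => Set.mem_sInter.2 fun T hT => hT.1.conjAdd b (Set.mem_sInter.1 ha T hT)
  · exact fun b _ a ha => Set.mem_sInter.2 fun T hT => hT.1.conjMul b (Set.mem_sInter.1 ha T hT)
  · exact fun b _ a ha => Set.mem_sInter.2 fun T hT => hT.1.starL b (Set.mem_sInter.1 ha T hT)
  · exact fun a ha b _ => Set.mem_sInter.2 fun T hT => hT.1.starR (Set.mem_sInter.1 ha T hT) b

theorem isIdeal_commIdeal (I J : Set B) : IsIdeal (commIdeal I J) :=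
  isIdeal_idealClosure _

theorem commSet_mono_right {I J J' : Set B} (h : J ⊆ J') : commSet I J ⊆ commSet I J' := by
  apply Set.union_subset_union
  apply Set.union_subset_union
  · exact SetLike.coe_subset_coe.2 <| AddSubgroup.closure_mono
      (fun x ⟨i, hi, j, hj, hx⟩ => ⟨i, hi, j, h hj, hx⟩)
  · exact SetLike.coe_subset_coe.2 <| Subgroup.closure_mono
      (fun x ⟨i, hi, j, hj, hx⟩ => ⟨i, hi, j, h hj, hx⟩)
  · exact fun x ⟨i, hi, j, hj, hx⟩ => ⟨i, hi, j, h hj, hx⟩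

theorem commIdeal_mono_right {I J J' : Set B} (h : J ⊆ J') : commIdeal I J ⊆ commIdeal I J' :=
  idealClosure_mono (commSet_mono_right h)

/-! ### Congruence modulo an ideal -/

section Rel

variable {L : Set B} (hL : IsIdeal L)
include hL

theorem r_refl (a : B) : -a + a ∈ L := by simpa using hL.memZero

theorem r_symm {a b : B} (h : -a + b ∈ L) : -b + a ∈ L := by
  have := hL.memNeg h
  simpa [neg_add_rev] using this

theorem r_trans {a b c : B} (h1 : -a + b ∈ L) (h2 : -b + c ∈ L) : -a + c ∈ L := by
  have := hL.memAdd h1 h2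
  simpa [add_assoc] using this

theorem r_add {a b c d : B} (h1 : -a + b ∈ L) (h2 : -c + d ∈ L) : -(a + c) + (b + d) ∈ L := by
  have h3 : -c + (-a + b) + -(-c) ∈ L := hL.conjAdd (-c) h1
  have h4 := hL.memAdd h3 h2
  have e : -(a + c) + (b + d) = -c + (-a + b) + -(-c) + (-c + d) := by
    simp [neg_add_rev, add_assoc]
  rw [e]; exact h4

theorem r_swap {a b : B} (h : -a + b ∈ L) : b + -a ∈ L := by
  have := hL.conjAdd a h
  simpa [add_assoc] using this

theorem r_unswap {a b : B} (h : b + -a ∈ L) : -a + b ∈ L := by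
  have := hL.conjAdd (-a) h
  simpa [add_assoc] using this

theorem r_mul_iff {a b : B} : -a + b ∈ L ↔ a⁻¹ * b ∈ L := by
  constructor
  · intro h
    have e : b = a + (-a + b) := by rw [add_neg_cancel_left]
    rw [e, sb_inv_mul_add']
    exact hL.memAdd (hL.starL _ h) h
  · intro h
    have e : b = a * (a⁻¹ * b) := by rw [mul_inv_cancel_left]
    rw [e, sb_mul_eq' a (a⁻¹ * b)]
    have : -a + (a + (sbStar a (a⁻¹ * b) + a⁻¹ * b)) = sbStar a (a⁻¹ * b) + a⁻¹ * b :=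
      neg_add_cancel_left _ _
    rw [this]
    exact hL.memAdd (hL.starL _ h) h

theorem r_mul {a b c d : B} (h1 : -a + b ∈ L) (h2 : -c + d ∈ L) : -(a * c) + b * d ∈ L := by
  rw [r_mul_iff hL] at h1 h2 ⊢
  have e : (a * c)⁻¹ * (b * d) = (c⁻¹ * (a⁻¹ * b) * (c⁻¹)⁻¹) * (c⁻¹ * d) := by group
  rw [e]
  exact hL.memMul (hL.conjMul c⁻¹ h1) h2

end Rel

/-! ### The `Good` predicate -/

def GoodRel (L : Set B) (i x : B) : Prop :=
  -(x + i) + (i + x) ∈ L ∧ -(x * i) + i * x ∈ L ∧ -(i + x) + i * x ∈ L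

theorem GoodRel.mul {L : Set B} (hL : IsIdeal L) {i x y : B}
    (hx : GoodRel L i x) (hy : GoodRel L i y) : GoodRel L i (x * y) := by
  obtain ⟨hx1, hx2, hx3⟩ := hx
  obtain ⟨hy1, hy2, hy3⟩ := hy
  -- x * i ≡ i + x
  have hxe : -(x * i) + (i + x) ∈ L := r_trans hL hx2 (r_symm hL hx3)
  -- x * i ≡ x + i
  have hxe' : -(x * i) + (x + i) ∈ L := r_trans hL hxe (r_symm hL hx1)
  have hye : -(y * i) + (i + y) ∈ L := r_trans hL hy2 (r_symm hL hy3)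
  have hye' : -(y * i) + (y + i) ∈ L := r_trans hL hye (r_symm hL hy1)
  -- third condition: i * (x*y) ≡ i + x*y
  have t1 : -(i * (x * y)) + x * (i * y) ∈ L := by
    have h := r_mul hL (r_symm hL hx2) (r_refl hL y)
    rw [mul_assoc, mul_assoc] at h
    exact h
  have t2 : -(x * (i * y)) + (i + x * y) ∈ L := by
    have h2 := r_mul hL (r_refl hL x) (r_symm hL hy3)
    have h3 : -(x * (i + y)) + (i + x * y) ∈ L := by
      rw [SkewBrace.skew_distrib]
      have h4 := r_add hL hxe (r_refl hL (-x + x * y))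
      have e : (i + x) + (-x + x * y) = i + x * y := by
        rw [add_assoc, add_neg_cancel_left]
      rw [e] at h4
      exact h4
    exact r_trans hL h2 h3
  have good3 : -(i + x * y) + i * (x * y) ∈ L := r_symm hL (r_trans hL t1 t2)
  -- second condition: i * (x*y) ≡ (x*y) * i
  have good2 : -((x * y) * i) + i * (x * y) ∈ L := by
    have s1 : -(i * (x * y)) + x * (i * y) ∈ L := t1
    have s2 : -(x * (i * y)) + x * (y * i) ∈ L := by
      have := r_mul hL (r_refl hL x) (r_symm hL hy2)
      exact this
    have s3 : x * (y * i) = (x * y) * i := (mul_assoc x y i).symm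
    have := r_trans hL s1 (s3 ▸ s2)
    exact r_symm hL this
  -- (x*y) * i ≡ x*y + i
  have tzi : -((x * y) * i) + (x * y + i) ∈ L := by
    have u1 : -((x * y) * i) + x * (y + i) ∈ L := by
      have := r_mul hL (r_refl hL x) hye'
      rw [← mul_assoc] at this
      exact this
    have u2 : -(x * (y + i)) + (x * y + i) ∈ L := by
      rw [SkewBrace.skew_distrib]
      have h4 := r_add hL (r_refl hL (x * y)) (r_add hL (r_refl hL (-x)) hxe')
      have e : x * y + (-x + (x + i)) = x * y + i := by
        rw [neg_add_cancel_left]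
      rw [e] at h4
      exact h4
    exact r_trans hL u1 u2
  -- first condition: x*y + i ≡ i + x*y
  have good1 : -(x * y + i) + (i + x * y) ∈ L := by
    exact r_trans hL (r_symm hL tzi) (r_trans hL good2 (r_symm hL good3))
  exact ⟨good1, good2, good3⟩

theorem goodRel_of_comm {L I J : Set B} (hL : IsIdeal L) (hsub : commSet I J ⊆ L)
    {i j : B} (hi : i ∈ I) (hj : j ∈ J) : GoodRel L i j := by
  refine ⟨?_, ?_, ?_⟩
  · have hmem : addCommutator i j ∈ commSet I J :=
      Set.mem_union_left _ (Set.mem_union_left _ (AddSubgroup.subset_closure ⟨i, hi, j, hj, rfl⟩))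
    have e : addCommutator i j = -(j + i) + (i + j) := by
      simp [addCommutator, neg_add_rev, add_assoc]
    rw [← e]
    exact hsub hmem
  · have hmem : mulCommutator i j ∈ commSet I J :=
      Set.mem_union_left _ (Set.mem_union_right _ (Subgroup.subset_closure ⟨i, hi, j, hj, rfl⟩))
    rw [r_mul_iff hL]
    have e : (j * i)⁻¹ * (i * j) = mulCommutator i j := by
      rw [mulCommutator]; group
    rw [e]
    exact hsub hmem
  · have hmem : i * j + -(i + j) ∈ commSet I J :=
      Set.mem_union_right _ ⟨i, hi, j, hj, rfl⟩
    exact r_unswap hL (hsub hmem)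

end SkewBrace


namespace SkewBrace

variable {B : Type u} [SkewBrace B]

/-- The set `{p + q : p ∈ P, q ∈ Q}`. -/
def sumSet (P Q : Set B) : Set B := {x | ∃ p ∈ P, ∃ q ∈ Q, x = p + q}

theorem left_subset_sumSet {P Q : Set B} (hQ : IsIdeal Q) : P ⊆ sumSet P Q :=
  fun p hp => ⟨p, hp, 0, hQ.memZero, (add_zero p).symm⟩

theorem right_subset_sumSet {P Q : Set B} (hP : IsIdeal P) : Q ⊆ sumSet P Q :=
  fun q hq => ⟨0, hP.memZero, q, hq, (zero_add q).symm⟩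

/-- `p + q = p * q'` for some `q' ∈ Q`. -/
theorem add_eq_mul_rep {Q : Set B} (hQ : IsIdeal Q) (p : B) {q : B} (hq : q ∈ Q) :
    ∃ q' ∈ Q, p + q = p * q' := by
  refine ⟨sbStar p⁻¹ q + q, hQ.memAdd (hQ.starL p⁻¹ hq) hq, ?_⟩
  rw [← sb_inv_mul_add', mul_inv_cancel_left]

/-- `p * q ∈ P + Q`. -/
theorem mul_mem_sumSet {P Q : Set B} (hQ : IsIdeal Q) {p q : B} (hp : p ∈ P) (hq : q ∈ Q) :
    p * q ∈ sumSet P Q :=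
  ⟨p, hp, sbStar p q + q, hQ.memAdd (hQ.starL p hq) hq, sb_mul_eq' p q⟩

theorem sumSet_rep_mul {P Q : Set B} (hQ : IsIdeal Q) {x : B} (hx : x ∈ sumSet P Q) :
    ∃ p ∈ P, ∃ q ∈ Q, x = p * q := by
  obtain ⟨p, hp, q, hq, rfl⟩ := hx
  obtain ⟨q', hq', e⟩ := add_eq_mul_rep hQ p hq
  exact ⟨p, hp, q', hq', e⟩

theorem isSubbrace_sumSet {P Q : Set B} (hP : IsIdeal P) (hQ : IsIdeal Q) :
    IsSubbrace (sumSet P Q) := by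
  constructor
  · exact ⟨0, hP.memZero, 0, hQ.memZero, (add_zero 0).symm⟩
  · rintro _ _ ⟨p, hp, q, hq, rfl⟩ ⟨p', hp', q', hq', rfl⟩
    refine ⟨p + (q + p' + -q), hP.memAdd hp (hP.conjAdd q hp'), q + q', hQ.memAdd hq hq', ?_⟩
    simp [add_assoc]
  · rintro _ ⟨p, hp, q, hq, rfl⟩
    refine ⟨-q + -p + q, ?_, -q, hQ.memNeg hq, ?_⟩
    · have := hP.conjAdd (-q) (hP.memNeg hp)
      simpa using this
    · simp [add_assoc, neg_add_rev]
  · rintro x y hx hy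
    obtain ⟨p, hp, q, hq, rfl⟩ := sumSet_rep_mul hQ hx
    obtain ⟨p', hp', q', hq', rfl⟩ := sumSet_rep_mul hQ hy
    have e : (p * q) * (p' * q') = (p * (q * p' * q⁻¹)) * (q * q') := by group
    rw [e]
    exact mul_mem_sumSet hQ (hP.memMul hp (hP.conjMul q hp')) (hQ.memMul hq hq')
  · rintro x hx
    obtain ⟨p, hp, q, hq, rfl⟩ := sumSet_rep_mul hQ hx
    have e : (p * q)⁻¹ = p⁻¹ * (p * q⁻¹ * p⁻¹) := by group
    rw [e]
    exact mul_mem_sumSet hQ (hP.memInv hp) (hQ.conjMul p (hQ.memInv hq))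

theorem star_mul_left_formula (p q b : B) :
    sbStar (p * q) b = sbStar p (sbStar q b) + sbStar q b + sbStar p b := by
  have hq : q * b = q + (sbStar q b + b) := sb_mul_eq' q b
  have h1 : (p * q) * b = p * (q + (sbStar q b + b)) := by rw [mul_assoc, hq]
  rw [sbStar, h1, SkewBrace.skew_distrib, SkewBrace.skew_distrib,
    sb_mul_eq' p (sbStar q b), sb_mul_eq' p b]
  simp [sbStar, neg_add_rev, add_assoc]

theorem isIdeal_sumSet {P Q : Set B} (hP : IsIdeal P) (hQ : IsIdeal Q) :
    IsIdeal (sumSet P Q) := by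
  refine ⟨Set.subset_univ _, isSubbrace_sumSet hP hQ, ?_, ?_, ?_, ?_⟩
  · rintro b - _ ⟨p, hp, q, hq, rfl⟩
    refine ⟨b + p + -b, hP.conjAdd b hp, b + q + -b, hQ.conjAdd b hq, ?_⟩
    simp [add_assoc, neg_add_rev]
  · rintro b - x hx
    obtain ⟨p, hp, q, hq, rfl⟩ := sumSet_rep_mul hQ hx
    have e : b * (p * q) * b⁻¹ = (b * p * b⁻¹) * (b * q * b⁻¹) := by group
    rw [e]
    exact mul_mem_sumSet hQ (hP.conjMul b hp) (hQ.conjMul b hq)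
  · rintro b - _ ⟨p, hp, q, hq, rfl⟩
    refine ⟨sbStar b p, hP.starL b hp, p + sbStar b q + -p, hQ.conjAdd p (hQ.starL b hq), ?_⟩
    simp only [sbStar, SkewBrace.skew_distrib]
    simp [neg_add_rev, add_assoc]
  · rintro x hx b -
    obtain ⟨p, hp, q, hq, rfl⟩ := sumSet_rep_mul hQ hx
    rw [star_mul_left_formula]
    have hu : sbStar p (sbStar q b) ∈ Q := hQ.starL p (hQ.starR hq b)
    have ht : sbStar q b ∈ Q := hQ.starR hq b
    have hv : sbStar p b ∈ P := hP.starR hp b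
    set u := sbStar p (sbStar q b)
    set t := sbStar q b
    set v := sbStar p b
    refine ⟨(u + t) + v + -(u + t), hP.conjAdd (u + t) hv, u + t, hQ.memAdd hu ht, ?_⟩
    simp [add_assoc, neg_add_rev]

theorem coe_addClosure_union {P Q : Set B} (hP : IsIdeal P) (hQ : IsIdeal Q) :
    ((AddSubgroup.closure (P ∪ Q) : AddSubgroup B) : Set B) = sumSet P Q := by
  apply Set.Subset.antisymm
  · intro x hx
    have h1 : AddSubgroup.closure (P ∪ Q) ≤ (isSubbrace_sumSet hP hQ).toAddSubgroup :=
      (AddSubgroup.closure_le _).2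
        (Set.union_subset (left_subset_sumSet hQ) (right_subset_sumSet hP))
    exact h1 hx
  · rintro _ ⟨p, hp, q, hq, rfl⟩
    exact AddSubgroup.add_mem _
      (AddSubgroup.subset_closure (Set.mem_union_left _ hp))
      (AddSubgroup.subset_closure (Set.mem_union_right _ hq))

theorem coe_mulClosure_union {P Q : Set B} (hP : IsIdeal P) (hQ : IsIdeal Q) :
    ((Subgroup.closure (P ∪ Q) : Subgroup B) : Set B) = sumSet P Q := by
  apply Set.Subset.antisymm
  · intro x hx
    have h1 : Subgroup.closure (P ∪ Q) ≤ (isSubbrace_sumSet hP hQ).toSubgroup :=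
      (Subgroup.closure_le _).2
        (Set.union_subset (left_subset_sumSet hQ) (right_subset_sumSet hP))
    exact h1 hx
  · intro x hx
    obtain ⟨p, hp, q, hq, rfl⟩ := sumSet_rep_mul hQ hx
    exact Subgroup.mul_mem _
      (Subgroup.subset_closure (Set.mem_union_left _ hp))
      (Subgroup.subset_closure (Set.mem_union_right _ hq))

end SkewBrace

/-- `[I, JK]^B = [I, J+K]^B = [I,J]^B + [I,K]^B = [I,J]^B · [I,K]^B`. -/
theorem commIdeal_sum {B : Type u} [SkewBrace B] (I J K : Set B)
    (hI : IsIdeal I) (hJ : IsIdeal J) (hK : IsIdeal K) :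
    commIdeal I ((Subgroup.closure (J ∪ K) : Subgroup B) : Set B) =
        commIdeal I ((AddSubgroup.closure (J ∪ K) : AddSubgroup B) : Set B) ∧
    commIdeal I ((AddSubgroup.closure (J ∪ K) : AddSubgroup B) : Set B) =
        ((AddSubgroup.closure (commIdeal I J ∪ commIdeal I K) : AddSubgroup B) : Set B) ∧
    ((AddSubgroup.closure (commIdeal I J ∪ commIdeal I K) : AddSubgroup B) : Set B) =
        ((Subgroup.closure (commIdeal I J ∪ commIdeal I K) : Subgroup B) : Set B) := by
  have hP' : IsIdeal (commIdeal I J) := isIdeal_commIdeal I J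
  have hQ' : IsIdeal (commIdeal I K) := isIdeal_commIdeal I K
  have hM : ((AddSubgroup.closure (J ∪ K) : AddSubgroup B) : Set B) = sumSet J K :=
    coe_addClosure_union hJ hK
  have hM' : ((Subgroup.closure (J ∪ K) : Subgroup B) : Set B) = sumSet J K :=
    coe_mulClosure_union hJ hK
  have hL : ((AddSubgroup.closure (commIdeal I J ∪ commIdeal I K) : AddSubgroup B) : Set B)
      = sumSet (commIdeal I J) (commIdeal I K) := coe_addClosure_union hP' hQ'
  have hL' : ((Subgroup.closure (commIdeal I J ∪ commIdeal I K) : Subgroup B) : Set B)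
      = sumSet (commIdeal I J) (commIdeal I K) := coe_mulClosure_union hP' hQ'
  have hLid : IsIdeal (sumSet (commIdeal I J) (commIdeal I K)) := isIdeal_sumSet hP' hQ'
  refine ⟨by rw [hM, hM'], ?_, by rw [hL, hL']⟩
  rw [hM, hL]
  apply Set.Subset.antisymm
  · -- `commIdeal I (sumSet J K) ⊆ sumSet (commIdeal I J) (commIdeal I K)`
    have good : ∀ i ∈ I, ∀ m ∈ sumSet J K,
        GoodRel (sumSet (commIdeal I J) (commIdeal I K)) i m := by
      intro i hi m hm
      obtain ⟨j, hj, k, hk, rfl⟩ := hm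
      obtain ⟨k', hk', e⟩ := add_eq_mul_rep hK j hk
      rw [e]
      have gJ : GoodRel (sumSet (commIdeal I J) (commIdeal I K)) i j :=
        goodRel_of_comm hLid ((subset_idealClosure _).trans (left_subset_sumSet hQ')) hi hj
      have gK : GoodRel (sumSet (commIdeal I J) (commIdeal I K)) i k' :=
        goodRel_of_comm hLid ((subset_idealClosure _).trans (right_subset_sumSet hP')) hi hk'
      exact GoodRel.mul hLid gJ gK
    have hsub : commSet I (sumSet J K) ⊆ sumSet (commIdeal I J) (commIdeal I K) := by
      intro x hx
      rcases hx with (hx | hx) | hx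
      · have h1 : AddSubgroup.closure
            {x : B | ∃ i ∈ I, ∃ m ∈ sumSet J K, x = addCommutator i m}
            ≤ hLid.isSubbrace.toAddSubgroup := by
          apply (AddSubgroup.closure_le _).2
          rintro _ ⟨i, hi, m, hm, rfl⟩
          have g := (good i hi m hm).1
          have e : addCommutator i m = -(m + i) + (i + m) := by
            simp [SkewBrace.addCommutator, neg_add_rev, add_assoc]
          show addCommutator i m ∈ sumSet (commIdeal I J) (commIdeal I K)
          rw [e]
          exact g
        exact h1 hx
      · have h1 : Subgroup.closure
            {x : B | ∃ i ∈ I, ∃ m ∈ sumSet J K, x = mulCommutator i m}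
            ≤ hLid.isSubbrace.toSubgroup := by
          apply (Subgroup.closure_le _).2
          rintro _ ⟨i, hi, m, hm, rfl⟩
          have g := (good i hi m hm).2.1
          rw [r_mul_iff hLid] at g
          have e : mulCommutator i m = (m * i)⁻¹ * (i * m) := by rw [mulCommutator]; group
          show mulCommutator i m ∈ sumSet (commIdeal I J) (commIdeal I K)
          rw [e]
          exact g
        exact h1 hx
      · obtain ⟨i, hi, m, hm, rfl⟩ := hx
        exact r_swap hLid (good i hi m hm).2.2
    exact idealClosure_le hLid hsub
  · rintro _ ⟨p, hp, q, hq, rfl⟩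
    have hMid : IsIdeal (commIdeal I (sumSet J K)) := isIdeal_commIdeal _ _
    have h1 : commIdeal I J ⊆ commIdeal I (sumSet J K) :=
      commIdeal_mono_right (left_subset_sumSet hK)
    have h2 : commIdeal I K ⊆ commIdeal I (sumSet J K) :=
      commIdeal_mono_right (right_subset_sumSet hJ)
    exact hMid.memAdd (h1 hp) (h2 hq)
end
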